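/- arXiv:0912.0620 — 7 statements merged into one kernel-verified Lean document; each statement's English description precedes it below -/
import Mathlib

section
/- For every prime p with p ≡ 1 (mod 4), the Pochhammer value (3/4)_p is congruent to 3·(1/4)_p modulo p^3, i.e., the rational number (3/4)_p − 3·(1/4)_p has p-adic valuation at least 3. -/
/-!
Write `(3/4)_p = A / 4^p` and `(1/4)_p = B / 4^p` with `A = ∏_{j<p} (3 + 4j)` and
`B = ∏_{j<p} (1 + 4j)`. For `p = 4m + 1` the factor `j = 3m` of `A` is `3p`, and the reflection
`j ↦ p - 1 - j` gives `B = p · ∏_j (b_j - 4p)`, where `b_j = 3 + 4j` runs over the other factors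
of `A`. These `b_j` form a reduced residue system mod `p`, so to first order in `p` the linear term
of `∏_j (b_j - 4p)` is a multiple of `∏_j b_j · ∑_j b_j⁻¹ ≡ ∑_{x ≠ 0} x⁻¹ ≡ 0 (mod p)`. Hence
`∏_j (b_j - 4p) ≡ ∏_j b_j (mod p²)` and `A - 3B = 3p (∏_j b_j - ∏_j (b_j - 4p))` is divisible
by `p³`.
-/

open Finset Polynomial

theorem Finset.prod_add_of_sq_eq_zero {ι R : Type*} [CommRing R] [DecidableEq ι] (s : Finset ι)
    (a : ι → R) {t : R} (ht : t ^ 2 = 0) :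
    ∏ k ∈ s, (a k + t) = ∏ k ∈ s, a k + t * ∑ k ∈ s, ∏ j ∈ s.erase k, a j := by
  have h := eval_add_of_sq_eq_zero (∏ k ∈ s, (C (a k) + X)) 0 t ht
  simpa [eval_prod, eval_finsetSum, derivative_prod_finset, mul_comm t] using h

theorem FiniteField.sum_inv_eq_zero {K : Type*} [Field K] [Fintype K] (hK : 2 < Fintype.card K) :
    ∑ x : K, x⁻¹ = 0 := by
  refine (Equiv.sum_comp (Equiv.inv K) id).trans ?_
  simpa using FiniteField.sum_pow_lt_card_sub_one K 1 (by omega)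

theorem FiniteField.sum_prod_erase_eq_zero {ι K : Type*} [Field K] [Fintype K] [DecidableEq ι]
    (hK : 2 < Fintype.card K) {s : Finset ι} {b : ι → K} (hb : Set.BijOn b s {0}ᶜ) :
    ∑ k ∈ s, ∏ j ∈ s.erase k, b j = 0 := by
  classical
  have hinv : ∑ k ∈ s, (b k)⁻¹ = ∑ x : K, x⁻¹ := by
    rw [← sum_erase univ (inv_zero : (0 : K)⁻¹ = 0)]
    refine sum_nbij b (fun k hk => by simpa using hb.mapsTo hk) hb.injOn ?_ fun _ _ => rfl
    simpa [Set.compl_eq_univ_sdiff] using hb.surjOn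
  calc ∑ k ∈ s, ∏ j ∈ s.erase k, b j = ∑ k ∈ s, (∏ j ∈ s, b j) * (b k)⁻¹ := by
        refine sum_congr rfl fun k hk => ?_
        have hbk : b k ≠ 0 := hb.mapsTo hk
        rw [← mul_prod_erase s b hk]
        field_simp
    _ = 0 := by rw [← mul_sum, hinv, sum_inv_eq_zero hK, mul_zero]

theorem Int.prod_add_prime_mul_modEq {ι : Type*} [DecidableEq ι] {p : ℕ} [Fact p.Prime]
    (hp : p ≠ 2) {s : Finset ι} {b : ι → ℤ} (hb : Set.BijOn (fun k => (b k : ZMod p)) s {0}ᶜ)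
    (c : ℤ) : ∏ k ∈ s, (b k + p * c) ≡ ∏ k ∈ s, b k [ZMOD p ^ 2] := by
  obtain ⟨e, he⟩ : (p : ℤ) ∣ ∑ k ∈ s, ∏ j ∈ s.erase k, b j := by
    rw [← ZMod.intCast_zmod_eq_zero_iff_dvd]
    push_cast
    exact FiniteField.sum_prod_erase_eq_zero
      (by rw [ZMod.card]; exact lt_of_le_of_ne (Fact.out : p.Prime).two_le (Ne.symm hp)) hb
  have hp2 : (p : ZMod (p ^ 2)) ^ 2 = 0 := by exact_mod_cast ZMod.natCast_self (p ^ 2)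
  have he' : ∑ k ∈ s, ∏ j ∈ s.erase k, (b j : ZMod (p ^ 2)) = p * e := by
    exact_mod_cast congrArg (Int.cast : ℤ → ZMod (p ^ 2)) he
  rw [← Nat.cast_pow, ← ZMod.intCast_eq_intCast_iff]
  push_cast
  rw [prod_add_of_sq_eq_zero _ _ (by linear_combination c ^ 2 * hp2), he']
  linear_combination c * e * hp2

theorem ZMod.bijOn_erase_range_of_intCast_eq_zero {p : ℕ} [Fact p.Prime] {a d : ℤ}
    (hd : ¬ (p : ℤ) ∣ d) {j₀ : ℕ} (hj₀ : j₀ < p) (h0 : ((a + d * j₀ : ℤ) : ZMod p) = 0) :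
    Set.BijOn (fun j : ℕ => ((a + d * j : ℤ) : ZMod p)) ((range p).erase j₀) {0}ᶜ := by
  set f := fun j : ℕ => ((a + d * j : ℤ) : ZMod p)
  have hd' : (d : ZMod p) ≠ 0 := by rwa [Ne, ZMod.intCast_zmod_eq_zero_iff_dvd]
  have hinj : Set.InjOn f (range p) := fun i hi j hj hij => by
    have hij' : (i : ZMod p) = j := by
      simp only [f] at hij
      push_cast at hij
      exact mul_left_cancel₀ hd' (add_left_cancel hij)
    simpa [ZMod.val_cast_of_lt (mem_range.1 hi), ZMod.val_cast_of_lt (mem_range.1 hj)] using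
      congrArg ZMod.val hij'
  have hmaps : Set.MapsTo f ((range p).erase j₀) ((univ.erase 0 : Finset (ZMod p))) :=
    fun j hj => by
      obtain ⟨hne, hj⟩ := mem_erase.1 hj
      simpa using fun hfj => hne (hinj hj (mem_range.2 hj₀) (hfj.trans h0.symm))
  have hinj' := hinj.mono (coe_subset.2 (erase_subset j₀ (range p)))
  have hsurj := surjOn_of_injOn_of_card_le f hmaps hinj' (by simp [card_erase_of_mem, hj₀])
  have ht : ((univ.erase 0 : Finset (ZMod p)) : Set (ZMod p)) = {0}ᶜ := by ext; simp
  rw [ht] at hmaps hsurj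
  exact ⟨hmaps, hinj', hsurj⟩

theorem ascPochhammer_eval_eq_prod_range {R : Type*} [CommSemiring R] (n : ℕ) (r : R) :
    (ascPochhammer R n).eval r = ∏ j ∈ range n, (r + j) := by
  induction n with
  | zero => simp
  | succ n ih => rw [ascPochhammer_succ_eval, ih, prod_range_succ]

theorem ascPochhammer_eval_div {K : Type*} [Field K] (n : ℕ) (a : K) {d : K} (hd : d ≠ 0) :
    (ascPochhammer K n).eval (a / d) = (∏ j ∈ range n, (a + d * j)) / d ^ n := by
  rw [ascPochhammer_eval_eq_prod_range, eq_div_iff (pow_ne_zero n hd), pow_eq_prod_const,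
    ← prod_mul_distrib]
  refine prod_congr rfl fun j _ => ?_
  field_simp

theorem padicNorm_intCast_div_pow_le {p : ℕ} [hp : Fact p.Prime] {N d : ℤ} {k : ℕ}
    (hN : (p : ℤ) ^ k ∣ N) (hd : ¬ (p : ℤ) ∣ d) (n : ℕ) :
    padicNorm p ((N : ℚ) / d ^ n) ≤ (p : ℚ) ^ (-(k : ℤ)) := by
  have hdn : ¬ (p : ℤ) ∣ d ^ n := fun h => hd (Int.Prime.dvd_pow' hp.out h)
  rw [padicNorm.div, ← Int.cast_pow, (padicNorm.int_eq_one_iff _).2 hdn, div_one]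
  exact padicNorm.dvd_iff_norm_le.1 (by exact_mod_cast hN)

theorem Nat.Prime.not_intCast_dvd_four {p : ℕ} (hp : p.Prime) (hp2 : p ≠ 2) : ¬ (p : ℤ) ∣ 4 :=
  fun h => hp2 <| (Nat.prime_dvd_prime_iff_eq hp Nat.prime_two).1 <|
    hp.dvd_of_dvd_pow (n := 2) (by exact_mod_cast h)

theorem pow_three_dvd_prod_sub_three_mul_prod {p : ℕ} (hp : p.Prime) (h4 : p % 4 = 1) :
    (p : ℤ) ^ 3 ∣ ∏ j ∈ range p, (3 + 4 * (j : ℤ)) - 3 * ∏ j ∈ range p, (1 + 4 * (j : ℤ)) := by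
  have := Fact.mk hp
  obtain ⟨m, hm⟩ : ∃ m, p = 4 * m + 1 := ⟨p / 4, by omega⟩
  have h3m : 3 * m ∈ range p := mem_range.2 (by omega)
  have hval : 3 + 4 * ((3 * m : ℕ) : ℤ) = 3 * p := by
    rw [hm]
    push_cast
    ring
  set S := (range p).erase (3 * m)
  have hA : ∏ j ∈ range p, (3 + 4 * (j : ℤ)) = 3 * p * ∏ j ∈ S, (3 + 4 * (j : ℤ)) := by
    rw [← mul_prod_erase _ _ h3m, hval]
  have hB : ∏ j ∈ range p, (1 + 4 * (j : ℤ)) = p * ∏ j ∈ S, (3 + 4 * (j : ℤ) + p * (-4)) := by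
    calc ∏ j ∈ range p, (1 + 4 * (j : ℤ))
        = ∏ j ∈ range p, -(3 + 4 * (j : ℤ) + p * (-4)) := by
          rw [← prod_range_reflect]
          refine prod_congr rfl fun j hj => ?_
          rw [Nat.cast_sub (by simp at hj; omega), Nat.cast_sub (by omega)]
          ring
      _ = -∏ j ∈ range p, (3 + 4 * (j : ℤ) + p * (-4)) := by
          rw [prod_neg, card_range, (show Odd p from ⟨2 * m, by omega⟩).neg_one_pow, neg_one_mul]
      _ = p * ∏ j ∈ S, (3 + 4 * (j : ℤ) + p * (-4)) := by
          rw [← mul_prod_erase _ _ h3m, hval]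
          ring
  have hres : Set.BijOn (fun j : ℕ => ((3 + 4 * j : ℤ) : ZMod p)) S {0}ᶜ := by
    refine ZMod.bijOn_erase_range_of_intCast_eq_zero (hp.not_intCast_dvd_four (by omega))
      (mem_range.1 h3m) ?_
    rw [hval, ZMod.intCast_zmod_eq_zero_iff_dvd]
    exact dvd_mul_left _ _
  obtain ⟨e, he⟩ := (Int.prod_add_prime_mul_modEq (by omega) hres (-4)).dvd
  rw [hA, hB]
  exact ⟨3 * e, by linear_combination 3 * (p : ℤ) * he⟩

/-- For every prime `p ≡ 1 (mod 4)`, `(3/4)_p ≡ 3 * (1/4)_p (mod p^3)`,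
i.e. the rational `(3/4)_p - 3 * (1/4)_p` has `p`-adic valuation at least `3`. -/
theorem poch_three_quarter_cong (p : ℕ) (hp : p.Prime) (h4 : p % 4 = 1) :
    padicNorm p ((ascPochhammer ℚ p).eval (3/4) - 3 * (ascPochhammer ℚ p).eval (1/4))
      ≤ (p : ℚ) ^ (-(3 : ℤ)) := by
  have := Fact.mk hp
  rw [ascPochhammer_eval_div _ _ four_ne_zero, ascPochhammer_eval_div _ _ four_ne_zero]
  refine (congrArg (padicNorm p) ?_).trans_le <|
    padicNorm_intCast_div_pow_le (pow_three_dvd_prod_sub_three_mul_prod hp h4)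
      (hp.not_intCast_dvd_four (by omega)) p
  push_cast
  ring
end

section
/- For every prime p with p ≡ 1 (mod 4), the product of (3/4 + k) for 0 ≤ k ≤ (p−3)/2 is congruent modulo p^2 to the product of (1/4 + k) for (p+1)/2 ≤ k ≤ p−1, as rational numbers whose difference has p-adic valuation at least 2. -/
/-!
Write `p = 2n + 1`; as `p ≡ 1 (mod 4)`, `n` is even. Clearing the denominators `4^n`, the two
products become `f(0)` and `f(2p)` for `f(x) = ∏_{k<n} (x + 4k + 3)`. Modulo `p^2` the square of
`2p` vanishes, so Taylor expansion gives `f(2p) + f(-2p) ≡ 2 f(0)`. Since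
`(4k + 3) + (4(n-1-k) + 3) = 2p`, reflecting the index shows `f(-2p) = (-1)^n f(0) = f(0)`,
hence `f(2p) ≡ f(0) (mod p^2)`.
-/

open Finset Polynomial

section CommRing

variable {R : Type*} [CommRing R]

theorem Polynomial.eval_add_add_eval_sub_of_sq_eq_zero (f : R[X])
    (x y : R) (hy : y ^ 2 = 0) : f.eval (x + y) + f.eval (x - y) = 2 * f.eval x := by
  have hy' : (-y) ^ 2 = 0 := by rwa [neg_sq]
  rw [sub_eq_add_neg, eval_add_of_sq_eq_zero f x y hy, eval_add_of_sq_eq_zero f x (-y) hy']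
  ring

theorem prod_range_sub_eq_neg_one_pow_mul_prod (f : ℕ → R) (c : R)
    (n : ℕ) (hf : ∀ k < n, f k + f (n - 1 - k) = c) :
    ∏ k ∈ range n, (f k - c) = (-1) ^ n * ∏ k ∈ range n, f k :=
  calc ∏ k ∈ range n, (f k - c) = ∏ k ∈ range n, (-1) * f (n - 1 - k) :=
        prod_congr rfl fun k hk => by rw [← hf k (mem_range.mp hk)]; ring
    _ = (-1) ^ n * ∏ k ∈ range n, f k := by
        rw [prod_mul_distrib, prod_const, card_range, prod_range_reflect f n]

theorem prod_range_four_mul_add_three_sub (n : ℕ) :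
    ∏ k ∈ range n, (4 * (k : R) + 3 - (4 * n + 2)) = (-1) ^ n * ∏ k ∈ range n, (4 * (k : R) + 3) :=
  prod_range_sub_eq_neg_one_pow_mul_prod (fun k => 4 * (k : R) + 3) _ n fun k hk => by
    rw [Nat.sub_sub, Nat.cast_sub (show 1 + k ≤ n by omega)]
    push_cast
    ring

theorem prod_range_four_mul_add_three_add_eq {n : ℕ} (hn : Even n)
    (h : (4 * (n : R) + 2) ^ 2 = 0) :
    ∏ k ∈ range n, (4 * (k : R) + 3 + (4 * n + 2)) = ∏ k ∈ range n, (4 * (k : R) + 3) := by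
  set f : R[X] := ∏ k ∈ range n, (X + C (4 * (k : R) + 3))
  have hf : ∀ x, f.eval x = ∏ k ∈ range n, (4 * (k : R) + 3 + x) := fun x => by
    simp only [f, eval_prod, eval_add, eval_X, eval_C, add_comm]
  have taylor := f.eval_add_add_eval_sub_of_sq_eq_zero 0 _ h
  have reflect := prod_range_four_mul_add_three_sub (R := R) n
  simp only [zero_add, zero_sub, hf, add_zero, ← sub_eq_add_neg] at taylor
  rw [reflect, hn.neg_one_pow, one_mul] at taylor
  linear_combination taylor

end CommRing

theorem prod_range_div_add (c d : ℤ) (hd : d ≠ 0) (n : ℕ) :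
    ∏ k ∈ range n, ((c : ℚ) / d + k) = ((∏ k ∈ range n, (d * k + c) : ℤ) : ℚ) / (d : ℚ) ^ n := by
  calc ∏ k ∈ range n, ((c : ℚ) / d + k) = ∏ k ∈ range n, (((d * k + c : ℤ) : ℚ) / d) :=
        prod_congr rfl fun k _ => by push_cast; field_simp; ring
    _ = _ := by rw [prod_div_distrib, prod_const, card_range, Int.cast_prod]

theorem prod_Icc_quarter_add (n : ℕ) :
    ∏ k ∈ Icc (n + 1) (2 * n), (1 / 4 + (k : ℚ)) =
      ((∏ k ∈ range n, (4 * k + 3 + (4 * n + 2)) : ℤ) : ℚ) / 4 ^ n := by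
  rw [← Ico_add_one_right_eq_Icc, prod_Ico_eq_prod_range, show 2 * n + 1 - (n + 1) = n by omega]
  calc _ = ∏ k ∈ range n, (((4 * n + 5 : ℤ) : ℚ) / (4 : ℤ) + k) :=
        prod_congr rfl fun k _ => by push_cast; ring
    _ = _ := by
        rw [prod_range_div_add _ _ (by norm_num), Int.cast_ofNat]
        congr! 3 with k
        ring

theorem sq_dvd_prod_range_four_mul_add_three_sub {n : ℕ} (hn : Even n) :
    (((2 * n + 1) ^ 2 : ℕ) : ℤ) ∣
      ∏ k ∈ range n, (4 * k + 3) - ∏ k ∈ range n, (4 * k + 3 + (4 * n + 2)) := by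
  rw [← ZMod.intCast_eq_intCast_iff_dvd_sub]
  push_cast
  refine prod_range_four_mul_add_three_add_eq hn ?_
  have hsq : (((2 * n + 1) ^ 2 : ℕ) : ZMod ((2 * n + 1) ^ 2)) = 0 := ZMod.natCast_self _
  push_cast at hsq
  linear_combination 4 * hsq

theorem padicNorm_four_pow {p : ℕ} [Fact p.Prime] (hp2 : p ≠ 2) (n : ℕ) :
    padicNorm p (4 ^ n) = 1 := by
  rw [show (4 : ℚ) ^ n = ((2 ^ (2 * n) : ℕ) : ℚ) by push_cast [pow_mul]; norm_num,
    padicNorm.nat_eq_one_iff]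
  exact fun h => hp2 ((Nat.prime_dvd_prime_iff_eq Fact.out Nat.prime_two).mp
    ((Fact.out : p.Prime).dvd_of_dvd_pow h))

/-- For every prime `p ≡ 1 (mod 4)`,
`∏_{k=0}^{(p-3)/2} (3/4 + k) ≡ ∏_{k=(p+1)/2}^{p-1} (1/4 + k) (mod p^2)`
as rationals, i.e. the difference has `p`-adic valuation at least `2`. -/
theorem prod_quarter_halves_cong (p : ℕ) (hp : p.Prime) (h4 : p % 4 = 1) :
    padicNorm p
      ((∏ k ∈ Finset.range ((p - 1) / 2), (3/4 + (k : ℚ))) -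
        (∏ k ∈ Finset.Icc ((p + 1) / 2) (p - 1), (1/4 + (k : ℚ))))
      ≤ (p : ℚ) ^ (-(2 : ℤ)) := by
  have := Fact.mk hp
  obtain ⟨n, rfl⟩ : ∃ n, p = 2 * n + 1 := ⟨p / 2, by omega⟩
  have hA : ∏ k ∈ range n, (3 / 4 + (k : ℚ)) =
      ((∏ k ∈ range n, (4 * k + 3) : ℤ) : ℚ) / 4 ^ n := by
    simpa using prod_range_div_add 3 4 (by norm_num) n
  rw [show (2 * n + 1 - 1) / 2 = n by omega, show (2 * n + 1 + 1) / 2 = n + 1 by omega,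
    show 2 * n + 1 - 1 = 2 * n by omega, hA, prod_Icc_quarter_add, div_sub_div_same,
    ← Int.cast_sub, padicNorm.div, padicNorm_four_pow (by omega), div_one]
  exact_mod_cast padicNorm.dvd_iff_norm_le.mp
    (sq_dvd_prod_range_four_mul_add_three_sub (Nat.even_iff.mpr (by omega)))
end

section
/- Let s_n = 64^n · ((1/4)_n)^2 / (n!)^2. For every prime p with p ≡ 1 (mod 4), s_p ≡ s_1 (mod p^2), i.e., s_p ≡ 4 (mod p^2). -/
/-!
Write `p = 4m + 1`. Cancelling the factor `4m + 1 = p` from `(1/4)_p` and from `p!` gives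
`s_p = 4^p B² / ((p-1)!)²` with `B = ∏_{i<p, i≠m} (4i + 1)`, so it suffices that
`2^(p-1) B ≡ (p-1)! (mod p²)`.

Writing `4i + 1 = r_i + p q_i` with `0 ≤ q_i ≤ 3`, the residues `r_i` run over `1, …, p-1`, so to
first order `B ≡ (p-1)! (1 + p S)` with `S = ∑ q_i / (4i+1) (mod p)`. Sorting the terms of `S` by
quarter and reflecting `r ↦ p - r` turns `S` into minus half the alternating harmonic sum
`∑_{k<p-1} (-1)^k / (k+1)`, which is `2 q` by the binomial expansion of `2^p`, where
`2^(p-1) = 1 + p q`. Hence `2^(p-1) B ≡ (1 + p q)(1 - p q)(p-1)! ≡ (p-1)!`.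
-/

open Finset
open scoped Nat

theorem Finset.prod_add_mul_eq_of_mul_self_eq_zero {ι R : Type*} [CommRing R] [DecidableEq ι]
    {u : R} (hu : u * u = 0) (s : Finset ι) (a b : ι → R) :
    ∏ i ∈ s, (a i + u * b i) = ∏ i ∈ s, a i + u * ∑ i ∈ s, b i * ∏ j ∈ s.erase i, a j := by
  induction s using Finset.induction_on with
  | empty => simp
  | insert x s hx ih =>
    have herase : ∑ i ∈ s, b i * ∏ j ∈ (insert x s).erase i, a j =
        a x * ∑ i ∈ s, b i * ∏ j ∈ s.erase i, a j := by
      rw [mul_sum]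
      refine sum_congr rfl fun i hi => ?_
      rw [erase_insert_of_ne (by rintro rfl; exact hx hi),
        prod_insert (fun h => hx (mem_of_mem_erase h)), mul_left_comm]
    rw [prod_insert hx, ih, prod_insert hx, sum_insert hx, erase_insert hx, herase]
    linear_combination (b x * ∑ i ∈ s, b i * ∏ j ∈ s.erase i, a j) * hu

theorem Finset.sum_range_mul_eq_sum_sum {M : Type*} [AddCommMonoid M] (f : ℕ → M) (a b : ℕ) :
    ∑ i ∈ range (a * b), f i = ∑ c ∈ range a, ∑ j ∈ range b, f (c * b + j) := by
  induction a with
  | zero => simp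
  | succ a ih => rw [Nat.succ_mul, sum_range_add, ih, sum_range_succ]

theorem Finset.sum_mul_prod_erase_eq {ι K : Type*} [Field K] [DecidableEq ι] (s : Finset ι)
    (a b : ι → K) (ha : ∀ i ∈ s, a i ≠ 0) :
    ∑ i ∈ s, b i * ∏ j ∈ s.erase i, a j = (∑ i ∈ s, b i * (a i)⁻¹) * ∏ j ∈ s, a j := by
  rw [sum_mul]
  refine sum_congr rfl fun i hi => ?_
  rw [← mul_prod_erase s a hi]
  field_simp [ha i hi]

def fermatQuotient (a p : ℕ) : ℕ := (a ^ (p - 1) - 1) / p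

theorem Nat.Prime.pow_sub_one_eq_one_add_mul_fermatQuotient {a p : ℕ} (hp : p.Prime)
    (ha : a.Coprime p) : a ^ (p - 1) = 1 + p * fermatQuotient a p := by
  have hpos : 1 ≤ a ^ (p - 1) := Nat.one_le_pow _ _ (Nat.pos_of_ne_zero (by
    rintro rfl; exact hp.one_lt.ne' (by simpa using ha)))
  have hdvd : p ∣ a ^ (p - 1) - 1 :=
    (Nat.modEq_iff_dvd' hpos).mp (Nat.ModEq.pow_card_sub_one_eq_one hp ha).symm
  rw [fermatQuotient, Nat.mul_div_cancel' hdvd]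
  omega

theorem ZMod.natCast_choose_sub_one {p : ℕ} [Fact p.Prime] {k : ℕ} (hk : k < p) :
    ((p - 1).choose k : ZMod p) = (-1) ^ k := by
  have hp := (Fact.out : p.Prime)
  -- Cast the alternating row sum of Pascal's triangle: only the term `k = 0` survives mod `p`.
  have h := congrArg (Int.cast : ℤ → ZMod p)
    (Int.alternating_sum_range_choose_eq_choose (n := p - 1) (m := k))
  push_cast at h
  rw [Nat.sub_add_cancel hp.one_le, sum_range_succ', sum_eq_zero fun j hj => ?_] at h
  · calc ((p - 1).choose k : ZMod p) = (-1) ^ k * ((-1) ^ k * ((p - 1).choose k : ZMod p)) := by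
          rw [← mul_assoc, ← mul_pow]; simp
      _ = (-1) ^ k := by rw [← h]; simp
  · rw [mem_range] at hj
    have : ((p.choose (j + 1) : ℕ) : ZMod p) = 0 :=
      (ZMod.natCast_eq_zero_iff _ _).mpr (hp.dvd_choose_self j.succ_ne_zero (by omega))
    rw [this, mul_zero]

theorem Nat.Prime.sum_choose_div_eq_two_mul_fermatQuotient {p : ℕ} (hp : p.Prime) (hp2 : p ≠ 2) :
    ∑ k ∈ range (p - 1), p.choose (k + 1) / p = 2 * fermatQuotient 2 p := by
  have := hp.two_le
  have hrow : 2 + ∑ k ∈ range (p - 1), p.choose (k + 1) = 2 ^ p := by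
    rw [← Nat.sum_range_choose, show p + 1 = p - 1 + 1 + 1 by omega, sum_range_succ,
      sum_range_succ', Nat.sub_add_cancel hp.one_le, Nat.choose_self, Nat.choose_zero_right]
    ring
  have hferm := hp.pow_sub_one_eq_one_add_mul_fermatQuotient
    ((Nat.coprime_primes Nat.prime_two hp).mpr (Ne.symm hp2))
  apply Nat.eq_of_mul_eq_mul_left hp.pos
  rw [mul_sum, sum_congr rfl fun k hk => Nat.mul_div_cancel'
    (hp.dvd_choose_self k.succ_ne_zero (by rw [mem_range] at hk; omega))]
  have : 2 ^ p = 2 * 2 ^ (p - 1) := by rw [← pow_succ']; congr 1; omega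
  rw [mul_left_comm]
  omega

theorem ZMod.natCast_div_mul_inv_eq {p n c r : ℕ} [NeZero p] (hn : n = c * p + r) (hr : r < p) :
    ((n / p : ℕ) : ZMod p) * (n : ZMod p)⁻¹ = c * (r : ZMod p)⁻¹ := by
  subst hn
  rw [add_comm, Nat.add_mul_div_right _ _ (Nat.pos_of_neZero p), Nat.div_eq_of_lt hr]
  simp

section QuarterSums

variable {p : ℕ} [Fact p.Prime]

theorem ZMod.natCast_choose_div_self {k : ℕ} (hk : k < p - 1) :
    ((p.choose (k + 1) / p : ℕ) : ZMod p) = (-1) ^ k * ((k + 1 : ℕ) : ZMod p)⁻¹ := by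
  have hp := (Fact.out : p.Prime)
  obtain ⟨d, hd⟩ := hp.dvd_choose_self k.succ_ne_zero (by omega)
  have hchoose : (p - 1).choose k = d * (k + 1) := by
    have h := Nat.add_one_mul_choose_eq (p - 1) k
    rw [Nat.sub_add_cancel hp.one_le, hd, mul_assoc] at h
    exact Nat.eq_of_mul_eq_mul_left hp.pos h
  have hne : ((k + 1 : ℕ) : ZMod p) ≠ 0 := by
    rw [Ne, ZMod.natCast_eq_zero_iff]
    exact fun h => absurd (Nat.le_of_dvd k.succ_pos h) (by omega)
  rw [hd, Nat.mul_div_cancel_left d hp.pos, eq_mul_inv_iff_mul_eq₀ hne, ← Nat.cast_mul,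
    ← hchoose, ZMod.natCast_choose_sub_one (by omega)]

theorem ZMod.sum_neg_one_pow_mul_inv_eq_two_mul_fermatQuotient (hp2 : p ≠ 2) :
    ∑ k ∈ range (p - 1), (-1 : ZMod p) ^ k * ((k + 1 : ℕ) : ZMod p)⁻¹ =
      2 * fermatQuotient 2 p := by
  rw [← sum_congr rfl fun k hk => ZMod.natCast_choose_div_self (mem_range.mp hk),
    ← Nat.cast_sum, (Fact.out : p.Prime).sum_choose_div_eq_two_mul_fermatQuotient hp2]
  push_cast
  rfl

variable {m : ℕ}

theorem sum_inv_four_mul_add_eq_neg (hm : p = 4 * m + 1) {j j' : ℕ} (hj : j + j' = 5) :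
    ∑ k ∈ range m, ((4 * k + j : ℕ) : ZMod p)⁻¹ =
      -∑ k ∈ range m, ((4 * k + j' : ℕ) : ZMod p)⁻¹ := by
  rw [← sum_range_reflect, ← sum_neg_distrib]
  refine sum_congr rfl fun k hk => ?_
  rw [mem_range] at hk
  rw [show 4 * (m - 1 - k) + j = p - (4 * k + j') by omega, Nat.cast_sub (by omega),
    ZMod.natCast_self, zero_sub, inv_neg]

theorem sum_inv_four_mul_add_two_add_inv_four_mul_add_four (hm : p = 4 * m + 1) :
    ∑ k ∈ range m, (((4 * k + 2 : ℕ) : ZMod p)⁻¹ + ((4 * k + 4 : ℕ) : ZMod p)⁻¹) =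
      -fermatQuotient 2 p := by
  have hA : ∑ k ∈ range m, (((4 * k + 1 : ℕ) : ZMod p)⁻¹ - ((4 * k + 2 : ℕ) : ZMod p)⁻¹ +
      ((4 * k + 3 : ℕ) : ZMod p)⁻¹ - ((4 * k + 4 : ℕ) : ZMod p)⁻¹) = 2 * fermatQuotient 2 p := by
    rw [← ZMod.sum_neg_one_pow_mul_inv_eq_two_mul_fermatQuotient (by omega),
      show p - 1 = m * 4 by omega, sum_range_mul_eq_sum_sum]
    refine sum_congr rfl fun k _ => ?_
    have h4 : (-1 : ZMod p) ^ (k * 4) = 1 := by rw [pow_mul']; norm_num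
    simp only [sum_range_succ, sum_range_zero, pow_add, h4]
    ring_nf
  have h14 := sum_inv_four_mul_add_eq_neg (p := p) hm (j := 1) (j' := 4) rfl
  have h32 := sum_inv_four_mul_add_eq_neg (p := p) hm (j := 3) (j' := 2) rfl
  have h2 : (2 : ZMod p) ≠ 0 := Ring.two_ne_zero (by rw [ZMod.ringChar_zmod_n]; omega)
  simp only [sum_add_distrib, sum_sub_distrib] at hA ⊢
  apply mul_left_cancel₀ h2
  linear_combination -hA + h14 + h32

theorem sum_div_mul_inv_four_mul_add_one (hm : p = 4 * m + 1) :
    ∑ i ∈ range p, (((4 * i + 1) / p : ℕ) : ZMod p) * ((4 * i + 1 : ℕ) : ZMod p)⁻¹ =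
      -fermatQuotient 2 p := by
  set f : ℕ → ZMod p := fun i => (((4 * i + 1) / p : ℕ) : ZMod p) * ((4 * i + 1 : ℕ) : ZMod p)⁻¹
  change ∑ i ∈ range p, f i = _
  have hlow : ∀ i ≤ m, f i = 0 := by
    intro i hi
    rcases hi.lt_or_eq with hi | rfl
    · simp only [f, Nat.div_eq_of_lt (by omega : 4 * i + 1 < p), Nat.cast_zero, zero_mul]
    · have : ((4 * i + 1 : ℕ) : ZMod p) = 0 := by rw [← hm, ZMod.natCast_self]
      simp only [f, this, inv_zero, mul_zero]
  -- In the `c`-th quarter, `4 (c m + k + 1) + 1 = c p + (4 k + 5 - c)`.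
  have hquarter : ∀ c r, c + r = 5 → 0 < c →
      ∑ k ∈ range m, f (c * m + k + 1) = c * ∑ k ∈ range m, ((4 * k + r : ℕ) : ZMod p)⁻¹ := by
    intro c r hcr hc
    rw [mul_sum]
    refine sum_congr rfl fun k hk => ZMod.natCast_div_mul_inv_eq ?_ ?_
    · have : c ≤ 5 := by omega
      interval_cases c <;> omega
    · rw [mem_range] at hk
      omega
  rw [show range p = range (4 * m + 1) from congrArg range hm, sum_range_succ',
    hlow 0 m.zero_le, add_zero, sum_range_mul_eq_sum_sum]
  simp only [sum_range_succ, sum_range_zero, zero_add]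
  rw [sum_eq_zero fun k hk => hlow _ (by rw [mem_range] at hk; omega), hquarter 1 4 rfl one_pos,
    hquarter 2 3 rfl two_pos, hquarter 3 2 rfl three_pos,
    ← sum_inv_four_mul_add_two_add_inv_four_mul_add_four hm, sum_add_distrib]
  simp only [Nat.cast_one, Nat.cast_ofNat]
  linear_combination 2 * sum_inv_four_mul_add_eq_neg (p := p) hm (j := 3) (j' := 2) rfl

end QuarterSums

theorem Nat.injOn_mul_add_mod {a p : ℕ} (b : ℕ) (ha : a.Coprime p) :
    Set.InjOn (fun i => (a * i + b) % p) (range p : Set ℕ) := fun _ hi _ hj hij =>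
  ((Nat.ModEq.add_right_cancel' b hij).cancel_left_of_coprime ha.symm).eq_of_lt_of_lt
    (mem_range.mp hi) (mem_range.mp hj)

section Residues

variable {p m : ℕ}

theorem coprime_four_of_eq_four_mul_add_one (hm : p = 4 * m + 1) : Nat.Coprime 4 p :=
  hm ▸ (Nat.coprime_mul_left_add_right 4 1 m).mpr (Nat.coprime_one_right 4)

theorem four_mul_add_one_mod_ne_zero (hm : p = 4 * m + 1) {i : ℕ} (hi : i < p) (hne : i ≠ m) :
    (4 * i + 1) % p ≠ 0 := by
  intro h
  refine hne (Nat.injOn_mul_add_mod 1 (coprime_four_of_eq_four_mul_add_one hm)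
    (mem_range.mpr hi) (mem_range.mpr (by omega)) ?_)
  simp only [h, ← hm, Nat.mod_self]

theorem prod_erase_four_mul_add_one_mod (hm : p = 4 * m + 1) :
    ∏ i ∈ (range p).erase m, (4 * i + 1) % p = (p - 1)! := by
  set t := (range p).erase m
  have hinj : Set.InjOn (fun i => (4 * i + 1) % p) t :=
    (Nat.injOn_mul_add_mod 1 (coprime_four_of_eq_four_mul_add_one hm)).mono
      (coe_subset.mpr (erase_subset m _))
  have himage : t.image (fun i => (4 * i + 1) % p) = Ico 1 p := by
    refine eq_of_subset_of_card_le (fun x hx => ?_) ?_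
    · obtain ⟨i, hi, rfl⟩ := mem_image.mp hx
      rw [mem_erase, mem_range] at hi
      have := four_mul_add_one_mod_ne_zero hm hi.2 hi.1
      exact mem_Ico.mpr ⟨by omega, Nat.mod_lt _ (by omega)⟩
    · rw [Finset.card_image_of_injOn hinj, card_erase_of_mem (mem_range.mpr (by omega)), card_range,
        Nat.card_Ico]
  have hfact := prod_Ico_id_eq_factorial (p - 1)
  rw [Nat.sub_add_cancel (by omega)] at hfact
  rw [← hfact, ← himage, prod_image hinj]

theorem ZMod.natCast_self_mul_eq_zero_iff (hp : p ≠ 0) (x : ZMod (p ^ 2)) :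
    (p : ZMod (p ^ 2)) * x = 0 ↔ ZMod.castHom (dvd_pow_self p two_ne_zero) (ZMod p) x = 0 := by
  have : NeZero (p ^ 2) := ⟨pow_ne_zero 2 hp⟩
  rw [← ZMod.natCast_zmod_val x, map_natCast, ← Nat.cast_mul, ZMod.natCast_eq_zero_iff,
    ZMod.natCast_eq_zero_iff]
  generalize x.val = v
  rw [sq]
  exact Nat.mul_dvd_mul_iff_left (Nat.pos_of_ne_zero hp)

theorem ZMod.natCast_self_mul_self_eq_zero (p : ℕ) : (p : ZMod (p ^ 2)) * p = 0 := by
  rw [← Nat.cast_mul, ← sq, ZMod.natCast_self]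

theorem ZMod.natCast_self_mul_eq_natCast_self_mul_iff (hp : p ≠ 0) (x y : ZMod (p ^ 2)) :
    (p : ZMod (p ^ 2)) * x = (p : ZMod (p ^ 2)) * y ↔
      ZMod.castHom (dvd_pow_self p two_ne_zero) (ZMod p) x =
        ZMod.castHom (dvd_pow_self p two_ne_zero) (ZMod p) y := by
  rw [← sub_eq_zero, ← mul_sub, ZMod.natCast_self_mul_eq_zero_iff hp, map_sub, sub_eq_zero]

variable [Fact p.Prime]

theorem natCast_prod_erase_four_mul_add_one (hm : p = 4 * m + 1) :
    ((∏ i ∈ (range p).erase m, (4 * i + 1) : ℕ) : ZMod (p ^ 2)) =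
      (p - 1)! * (1 - p * fermatQuotient 2 p) := by
  have hp := (Fact.out : p.Prime)
  set t := (range p).erase m
  -- Write `4 i + 1 = r i + p q i` and expand the product to first order in `p`.
  have hexpand : ((∏ i ∈ t, (4 * i + 1) : ℕ) : ZMod (p ^ 2)) = (p - 1)! + p * ∑ i ∈ t,
      (((4 * i + 1) / p : ℕ) : ZMod (p ^ 2)) *
        ∏ j ∈ t.erase i, (((4 * j + 1) % p : ℕ) : ZMod (p ^ 2)) := by
    rw [← prod_erase_four_mul_add_one_mod hm, Nat.cast_prod, Nat.cast_prod,
      ← prod_add_mul_eq_of_mul_self_eq_zero (ZMod.natCast_self_mul_self_eq_zero p)]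
    exact prod_congr rfl fun i _ => by rw [← Nat.cast_mul, ← Nat.cast_add, Nat.mod_add_div]
  have hne : ∀ i ∈ t, ((4 * i + 1 : ℕ) : ZMod p) ≠ 0 := fun i hi => by
    rw [mem_erase, mem_range] at hi
    rw [Ne, ZMod.natCast_eq_zero_iff, Nat.dvd_iff_mod_eq_zero]
    exact four_mul_add_one_mod_ne_zero hm hi.2 hi.1
  have hprod : ∏ j ∈ t, ((4 * j + 1 : ℕ) : ZMod p) = (p - 1)! := by
    simpa only [Nat.cast_prod, ZMod.natCast_mod] using
      congrArg (Nat.cast : ℕ → ZMod p) (prod_erase_four_mul_add_one_mod hm)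
  have hm0 : ((4 * m + 1 : ℕ) : ZMod p) = 0 := by rw [← hm, ZMod.natCast_self]
  have hfirst : (p : ZMod (p ^ 2)) * ∑ i ∈ t, (((4 * i + 1) / p : ℕ) : ZMod (p ^ 2)) *
      ∏ j ∈ t.erase i, (((4 * j + 1) % p : ℕ) : ZMod (p ^ 2)) =
      p * -((p - 1)! * fermatQuotient 2 p) := by
    rw [ZMod.natCast_self_mul_eq_natCast_self_mul_iff hp.ne_zero]
    simp only [map_sum, map_mul, map_prod, map_natCast, map_neg, ZMod.natCast_mod]
    rw [sum_mul_prod_erase_eq _ _ _ hne, hprod,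
      sum_erase _ (by rw [hm0, inv_zero, mul_zero]), sum_div_mul_inv_four_mul_add_one hm]
    ring
  rw [hexpand, hfirst]
  ring

theorem two_pow_mul_prod_erase_modEq (hm : p = 4 * m + 1) :
    2 ^ (p - 1) * ∏ i ∈ (range p).erase m, (4 * i + 1) ≡ (p - 1)! [MOD p ^ 2] := by
  have hp := (Fact.out : p.Prime)
  rw [← ZMod.natCast_eq_natCast_iff, Nat.cast_mul, natCast_prod_erase_four_mul_add_one hm,
    hp.pow_sub_one_eq_one_add_mul_fermatQuotient
      ((Nat.coprime_primes Nat.prime_two hp).mpr (by omega))]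
  push_cast
  linear_combination (-((p - 1)! : ZMod (p ^ 2)) * fermatQuotient 2 p ^ 2) *
    ZMod.natCast_self_mul_self_eq_zero p

theorem four_pow_mul_prod_erase_sq_modEq (hm : p = 4 * m + 1) :
    4 ^ p * (∏ i ∈ (range p).erase m, (4 * i + 1)) ^ 2 ≡ 4 * (p - 1)! ^ 2 [MOD p ^ 2] := by
  have h4 : 4 ^ p = 4 * (2 ^ (p - 1)) ^ 2 := by
    rw [← pow_mul, mul_comm (p - 1), pow_mul, show (2 ^ 2 : ℕ) = 4 by rfl, ← pow_succ',
      Nat.sub_add_cancel (Fact.out : p.Prime).one_le]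
  rw [h4, mul_assoc, ← mul_pow]
  exact ((two_pow_mul_prod_erase_modEq hm).pow 2).mul_left 4

end Residues

theorem padicNorm_natCast_factorial_sub_one_pow (p n : ℕ) [hp : Fact p.Prime] :
    padicNorm p (((p - 1)! ^ n : ℕ) : ℚ) = 1 := by
  rw [padicNorm.nat_eq_one_iff]
  intro h
  have := hp.out.dvd_factorial.mp (hp.out.dvd_of_dvd_pow h)
  have := hp.out.one_le
  omega

theorem padicNorm_natCast_sub_le_of_modEq {p n a b : ℕ} [Fact p.Prime] (h : a ≡ b [MOD p ^ n]) :
    padicNorm p ((a : ℚ) - b) ≤ (p : ℚ) ^ (-(n : ℤ)) := by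
  have hdvd : ((p ^ n : ℕ) : ℤ) ∣ (a : ℤ) - b := by
    rw [← dvd_neg, neg_sub]
    exact_mod_cast Nat.modEq_iff_dvd.mp h
  exact_mod_cast padicNorm.dvd_iff_norm_le.mp hdvd

theorem ascPochhammer_eval_one_div_four_mul_four_pow (n : ℕ) :
    (ascPochhammer ℚ n).eval (1 / 4) * 4 ^ n = ∏ i ∈ range n, ((4 * i + 1 : ℕ) : ℚ) := by
  induction n with
  | zero => simp
  | succ n ih =>
    rw [ascPochhammer_succ_eval, prod_range_succ, ← ih]
    push_cast
    ring

theorem sixtyFour_pow_mul_eval_sq_div_factorial_sq {p m : ℕ} (hm : p = 4 * m + 1) :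
    64 ^ p * ((ascPochhammer ℚ p).eval (1 / 4)) ^ 2 / (p ! : ℚ) ^ 2 =
      ((4 ^ p * (∏ i ∈ (range p).erase m, (4 * i + 1)) ^ 2 : ℕ) : ℚ) / ((p - 1)! ^ 2 : ℕ) := by
  have heval : (ascPochhammer ℚ p).eval (1 / 4) =
      (p * ∏ i ∈ (range p).erase m, ((4 * i + 1 : ℕ) : ℚ)) / 4 ^ p := by
    rw [eq_div_iff (by positivity), ascPochhammer_eval_one_div_four_mul_four_pow,
      ← mul_prod_erase _ _ (mem_range.mpr (show m < p by omega)), ← hm]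
  have hfact : (p ! : ℚ) = p * (p - 1)! := by
    rw [← Nat.mul_factorial_pred (by omega : p ≠ 0)]
    push_cast
    ring
  have hp : (p : ℚ) ≠ 0 := Nat.cast_ne_zero.mpr (by omega)
  rw [heval, hfact, show (64 : ℚ) ^ p = (4 ^ p) ^ 3 by rw [← pow_mul, mul_comm, pow_mul]; norm_num]
  push_cast
  field_simp

/-- Let `s_n = 64^n ((1/4)_n)^2 / (n!)^2`. For every prime `p ≡ 1 (mod 4)`,
`s_p ≡ s_1 (mod p^2)`, i.e. `s_p ≡ 4 (mod p^2)`. -/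
theorem s_p_cong (p : ℕ) (hp : p.Prime) (h4 : p % 4 = 1)
    (s : ℕ → ℚ)
    (hs : ∀ n, s n = (64 : ℚ) ^ n * ((ascPochhammer ℚ n).eval (1/4)) ^ 2 / (n.factorial : ℚ) ^ 2) :
    padicNorm p (s p - s 1) ≤ (p : ℚ) ^ (-(2 : ℤ)) ∧
      padicNorm p (s p - 4) ≤ (p : ℚ) ^ (-(2 : ℤ)) := by
  have : Fact p.Prime := ⟨hp⟩
  obtain ⟨m, hm⟩ : ∃ m, p = 4 * m + 1 := ⟨p / 4, by omega⟩
  have hs1 : s 1 = 4 := by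
    rw [hs]
    norm_num [ascPochhammer_one]
  have key : padicNorm p (s p - 4) ≤ (p : ℚ) ^ (-(2 : ℤ)) := by
    rw [hs, sixtyFour_pow_mul_eval_sq_div_factorial_sq hm,
      show (4 : ℚ) = ((4 * (p - 1)! ^ 2 : ℕ) : ℚ) / ((p - 1)! ^ 2 : ℕ) by
        push_cast; field_simp,
      ← sub_div, padicNorm.div, padicNorm_natCast_factorial_sub_one_pow, div_one]
    exact_mod_cast padicNorm_natCast_sub_le_of_modEq (four_pow_mul_prod_erase_sq_modEq hm)
  exact ⟨hs1 ▸ key, key⟩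
end

section
/- For a prime p ≡ 1 (mod 4) and nonnegative integer n, define F(n) = 4^{p−1} · ∏_{0≤j≤p−1, j≠(p−1)/4} (1+4j+4np)^2 · ∏_{i=0}^{p−2} (1+i+np)^{−2}. Then F(n) ≡ F(0) (mod p^2) for all n, where the congruence is between p-adic units. -/
/-!
Write `F n = 4 ^ (p - 1) * A n ^ 2 / B n ^ 2` with integer products
`A n = ∏_{j ≠ (p-1)/4} (1 + 4j + 4np)` and `B n = ∏_{i < p-1} (1 + i + np)`.
In each product the unshifted factors `f j` run exactly once through the nonzero residues
mod `p`, so to first order `∏ (f j + mp) ≡ ∏ f j * (1 + mp ∑ (f j)⁻¹) (mod p²)`, and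
`∑_{x ∈ 𝔽_p^×} x⁻¹ = ∑_{x ∈ 𝔽_p^×} x = 0` for odd `p`. Hence `A n ≡ A 0` and `B n ≡ B 0`
modulo `p²`, and `B n` is prime to `p`.
-/

open Finset

theorem sq_dvd_prod_add_sub_linear {ι R : Type*} [CommRing R] [DecidableEq ι] (s : Finset ι)
    (f : ι → R) (c : R) :
    c ^ 2 ∣ ∏ j ∈ s, (f j + c) - (∏ j ∈ s, f j + c * ∑ j ∈ s, ∏ k ∈ s.erase j, f k) := by
  induction s using Finset.induction_on with
  | empty => simp
  | @insert a s ha ih =>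
    obtain ⟨t, ht⟩ := ih
    have hsum : ∑ j ∈ insert a s, ∏ k ∈ (insert a s).erase j, f k
        = ∏ k ∈ s, f k + f a * ∑ j ∈ s, ∏ k ∈ s.erase j, f k := by
      rw [sum_insert ha, erase_insert ha, mul_sum]
      congr 1
      refine sum_congr rfl fun j hj => ?_
      rw [erase_insert_of_ne (ne_of_mem_of_not_mem hj ha).symm,
        prod_insert fun h => ha (mem_of_mem_erase h)]
    rw [prod_insert ha, prod_insert ha, hsum]
    exact ⟨(f a + c) * t + ∑ j ∈ s, ∏ k ∈ s.erase j, f k, by linear_combination (f a + c) * ht⟩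

section
variable {p : ℕ} [Fact p.Prime]

theorem ZMod.sum_range_eq_sum_univ {M : Type*} [AddCommMonoid M] (g : ZMod p → M) :
    ∑ j ∈ range p, g j = ∑ x : ZMod p, g x :=
  sum_nbij' (fun j => (j : ZMod p)) ZMod.val (fun _ _ => mem_univ _)
    (fun x _ => mem_range.mpr (ZMod.val_lt x))
    (fun _ hj => ZMod.val_cast_of_lt (mem_range.mp hj)) (fun x _ => ZMod.natCast_zmod_val x)
    (fun _ _ => rfl)

theorem ZMod.sum_inv_eq_zero (hp2 : p ≠ 2) : ∑ x : ZMod p, x⁻¹ = 0 := by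
  rw [Fintype.sum_equiv (Equiv.inv (ZMod p)) (fun x => x⁻¹) id fun _ => rfl]
  simpa using FiniteField.sum_pow_lt_card_sub_one (K := ZMod p) 1
    (by have := (Fact.out : p.Prime).two_le; rw [ZMod.card]; omega)

theorem ZMod.sum_inv_add_mul_erase_root (hp2 : p ≠ 2) {a : ZMod p} (b : ZMod p) (ha : a ≠ 0)
    {r : ℕ} (hroot : b + a * r = 0) : ∑ j ∈ (range p).erase r, (b + a * j)⁻¹ = 0 := by
  rw [sum_erase _ (by rw [hroot, inv_zero]), ZMod.sum_range_eq_sum_univ fun x => (b + a * x)⁻¹,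
    Fintype.sum_equiv ((Equiv.mulLeft₀ a ha).trans (Equiv.addLeft b)) (fun x => (b + a * x)⁻¹)
      (fun y => y⁻¹) fun _ => rfl]
  exact ZMod.sum_inv_eq_zero hp2

theorem ZMod.add_mul_ne_zero_of_ne_root {a : ZMod p} (b : ZMod p) (ha : a ≠ 0) {r j : ℕ}
    (hr : r < p) (hj : j < p) (hroot : b + a * r = 0) (hjr : j ≠ r) : b + a * j ≠ 0 := by
  intro h
  have hcast : (j : ZMod p) = r := mul_left_cancel₀ ha (by linear_combination h - hroot)
  rw [ZMod.natCast_eq_natCast_iff', Nat.mod_eq_of_lt hj, Nat.mod_eq_of_lt hr] at hcast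
  exact hjr hcast

theorem prod_add_mul_modEq_prod {ι : Type*} (s : Finset ι) (f : ι → ℤ)
    (hf : ∀ j ∈ s, (f j : ZMod p) ≠ 0) (hsum : ∑ j ∈ s, (f j : ZMod p)⁻¹ = 0) (m : ℤ) :
    ∏ j ∈ s, (f j + m * p) ≡ ∏ j ∈ s, f j [ZMOD p ^ 2] := by
  classical
  have hderiv : (p : ℤ) ∣ ∑ j ∈ s, ∏ k ∈ s.erase j, f k := by
    rw [← ZMod.intCast_zmod_eq_zero_iff_dvd]
    push_cast
    calc ∑ j ∈ s, ∏ k ∈ s.erase j, (f k : ZMod p)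
        = ∑ j ∈ s, (∏ k ∈ s, (f k : ZMod p)) * (f j : ZMod p)⁻¹ :=
          sum_congr rfl fun j hj => (eq_mul_inv_iff_mul_eq₀ (hf j hj)).mpr (prod_erase_mul s _ hj)
      _ = 0 := by rw [← mul_sum, hsum, mul_zero]
  obtain ⟨t, ht⟩ := hderiv
  obtain ⟨u, hu⟩ := sq_dvd_prod_add_sub_linear s f (m * p)
  exact Int.modEq_iff_dvd.mpr ⟨-(m ^ 2 * u + m * t), by linear_combination -hu - m * p * ht⟩

theorem not_dvd_prod_add_mul_erase_root {a : ℤ} (b : ℤ) (ha : ¬ (p : ℤ) ∣ a) {r : ℕ} (hr : r < p)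
    (hroot : (p : ℤ) ∣ b + a * r) (m : ℤ) :
    ¬ (p : ℤ) ∣ ∏ j ∈ (range p).erase r, (b + a * j + m * p) := by
  rw [← ZMod.intCast_zmod_eq_zero_iff_dvd] at ha hroot ⊢
  push_cast at hroot ⊢
  simp only [ZMod.natCast_self, mul_zero, add_zero]
  refine prod_ne_zero_iff.mpr fun j hj => ?_
  obtain ⟨hjr, hj⟩ := mem_erase.mp hj
  exact ZMod.add_mul_ne_zero_of_ne_root _ ha hr (mem_range.mp hj) hroot hjr

theorem prod_add_mul_erase_root_modEq (hp2 : p ≠ 2) {a : ℤ} (b : ℤ) (ha : ¬ (p : ℤ) ∣ a) {r : ℕ}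
    (hr : r < p) (hroot : (p : ℤ) ∣ b + a * r) (m m' : ℤ) :
    ∏ j ∈ (range p).erase r, (b + a * j + m * p)
      ≡ ∏ j ∈ (range p).erase r, (b + a * j + m' * p) [ZMOD p ^ 2] := by
  rw [← ZMod.intCast_zmod_eq_zero_iff_dvd] at ha hroot
  push_cast at hroot
  have hf : ∀ j ∈ (range p).erase r, ((b + a * j : ℤ) : ZMod p) ≠ 0 := fun j hj => by
    obtain ⟨hjr, hj⟩ := mem_erase.mp hj
    push_cast
    exact ZMod.add_mul_ne_zero_of_ne_root _ ha hr (mem_range.mp hj) hroot hjr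
  have hsum : ∑ j ∈ (range p).erase r, ((b + a * j : ℤ) : ZMod p)⁻¹ = 0 := by
    push_cast
    exact ZMod.sum_inv_add_mul_erase_root hp2 _ ha hroot
  exact (prod_add_mul_modEq_prod _ _ hf hsum m).trans (prod_add_mul_modEq_prod _ _ hf hsum m').symm

theorem padicNorm_div_sub_div_le {a b c d : ℤ} {k : ℕ}
    (hb : ¬ (p : ℤ) ∣ b) (hd : ¬ (p : ℤ) ∣ d) (h : a * d ≡ c * b [ZMOD p ^ k]) :
    padicNorm p (a / b - c / d) ≤ p ^ (-k : ℤ) := by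
  have hb0 : (b : ℚ) ≠ 0 := Int.cast_ne_zero.mpr fun h0 => hb (h0 ▸ dvd_zero _)
  have hd0 : (d : ℚ) ≠ 0 := Int.cast_ne_zero.mpr fun h0 => hd (h0 ▸ dvd_zero _)
  have hbd : padicNorm p (b * d : ℤ) = 1 := (padicNorm.int_eq_one_iff _).mpr fun h =>
    ((Nat.prime_iff_prime_int.mp Fact.out).dvd_mul.mp h).elim hb hd
  have hnum : ((p ^ k : ℕ) : ℤ) ∣ a * d - b * c := by
    rw [mul_comm b c]
    exact_mod_cast h.symm.dvd
  rw [div_sub_div _ _ hb0 hd0, ← Int.cast_mul, ← Int.cast_mul, ← Int.cast_mul, ← Int.cast_sub,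
    padicNorm.div, hbd, div_one]
  exact padicNorm.dvd_iff_norm_le.mp hnum

end

/-- For a prime `p ≡ 1 (mod 4)` and
`F(n) = 4^{p-1} ∏_{0≤j≤p-1, j≠(p-1)/4} (1+4j+4np)^2 ∏_{i=0}^{p-2} (1+i+np)^{-2}`,
we have `F(n) ≡ F(0) (mod p^2)` for all `n`. -/
theorem F_indep_of_n (p : ℕ) (hp : p.Prime) (h4 : p % 4 = 1)
    (F : ℕ → ℚ)
    (hF : ∀ n, F n = (4 : ℚ) ^ (p - 1)
      * (∏ j ∈ (Finset.range p).erase ((p - 1) / 4), (1 + 4 * (j : ℚ) + 4 * n * p) ^ 2)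
      * (∏ i ∈ Finset.range (p - 1), ((1 + (i : ℚ) + n * p)⁻¹) ^ 2))
    (n : ℕ) :
    padicNorm p (F n - F 0) ≤ (p : ℚ) ^ (-(2 : ℤ)) := by
  have : Fact p.Prime := ⟨hp⟩
  have hp5 : 5 ≤ p := by have := hp.two_le; omega
  set q := (p - 1) / 4
  set A : ℕ → ℤ := fun m => ∏ j ∈ (range p).erase q, (1 + 4 * j + 4 * m * p)
  set B : ℕ → ℤ := fun m => ∏ j ∈ (range p).erase (p - 1), (1 + 1 * j + m * p)
  have h4p : ¬ (p : ℤ) ∣ 4 := by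
    exact_mod_cast fun h => absurd (Nat.le_of_dvd (by norm_num) h) (by omega)
  have h1p : ¬ (p : ℤ) ∣ 1 := by
    exact_mod_cast fun h => absurd (Nat.le_of_dvd (by norm_num) h) (by omega)
  have hrootA : (p : ℤ) ∣ 1 + 4 * q := ⟨1, by omega⟩
  have hrootB : (p : ℤ) ∣ 1 + 1 * (p - 1 : ℕ) := ⟨1, by omega⟩
  have hBp : ∀ m : ℕ, ¬ (p : ℤ) ∣ B m ^ 2 := fun m h =>
    not_dvd_prod_add_mul_erase_root 1 h1p (by omega) hrootB m
      ((Nat.prime_iff_prime_int.mp hp).dvd_of_dvd_pow h)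
  have hF' : ∀ m, F m = ((4 ^ (p - 1) * A m ^ 2 : ℤ) : ℚ) / ((B m ^ 2 : ℤ) : ℚ) := by
    intro m
    have hrange : range (p - 1) = (range p).erase (p - 1) := by
      ext j; simp only [mem_range, mem_erase]; omega
    rw [hF, hrange]
    simp only [A, B, one_mul]
    push_cast
    simp only [div_eq_mul_inv, prod_pow, prod_inv_distrib, inv_pow]
  rw [hF' n, hF' 0]
  refine padicNorm_div_sub_div_le (hBp n) (hBp 0) ?_
  have hA := prod_add_mul_erase_root_modEq (by omega) 1 h4p (by omega) hrootA (4 * n) (4 * 0)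
  have hB := prod_add_mul_erase_root_modEq (by omega) 1 h1p (by omega) hrootB 0 n
  exact ((hA.pow 2).mul_left _).mul (hB.pow 2)
end

section
/- Let p = 6q+1 be prime and H_n = ∑_{k=1}^n 1/k. Then 2·(2^{6q}−1)/p ≡ H_{2q} − H_q (mod p), where both sides are interpreted as p-adic integers (Fermat quotient identity). -/
/-!
Since `(n + 1) C(n, j) = (j + 1) C(n + 1, j + 1)`, the Fermat quotient satisfies
`2 (2^(p-1) - 1) / p = ∑_{j < p-1} C(p-1, j) / (j + 1)`, a sum of `p`-adic integers.
Modulo `p`, `C(p-1, j) ≡ (-1)^j`, so this is the alternating harmonic sum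
`H_{6q} - H_{3q} ≡ -H_{3q}`, because the reflection `k ↦ p - k` makes `H_{p-1}` vanish.
For `2q < k ≤ 3q` the same reflection gives `2k ≡ -(2i + 1)` with `i = 3q - k < q`, whence
`H_{3q} - H_{2q} ≡ -2 ∑_{i<q} 1/(2i+1) = H_q - 2 H_{2q}`.
Reduction modulo `p` of `p`-integral rationals goes through `ℤ_[p]` and `PadicInt.toZMod`.
-/

open Finset

section HarmonicIn

variable (K : Type*) [Field K]

def harmonicIn (n : ℕ) : K := ∑ i ∈ range n, ((i + 1 : ℕ) : K)⁻¹

@[simp]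
lemma harmonicIn_zero : harmonicIn K 0 = 0 := rfl

lemma harmonicIn_succ (n : ℕ) :
    harmonicIn K (n + 1) = harmonicIn K n + ((n + 1 : ℕ) : K)⁻¹ :=
  sum_range_succ _ _

variable {K}

lemma inv_natCast_two_mul_succ (n : ℕ) :
    ((2 * n + 2 : ℕ) : K)⁻¹ = 2⁻¹ * ((n + 1 : ℕ) : K)⁻¹ := by
  rw [← mul_inv]; push_cast; ring_nf

lemma harmonicIn_two_mul (n : ℕ) :
    harmonicIn K (2 * n)
      = ∑ i ∈ range n, ((2 * i + 1 : ℕ) : K)⁻¹ + 2⁻¹ * harmonicIn K n := by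
  induction n with
  | zero => simp
  | succ n ih =>
    rw [show 2 * (n + 1) = 2 * n + 1 + 1 by ring, harmonicIn_succ, harmonicIn_succ, ih,
      sum_range_succ, harmonicIn_succ, show 2 * n + 1 + 1 = 2 * n + 2 by ring,
      inv_natCast_two_mul_succ]
    ring

lemma sum_range_neg_one_pow_mul_inv (h2 : (2 : K) ≠ 0) (n : ℕ) :
    ∑ j ∈ range (2 * n), (-1 : K) ^ j * ((j + 1 : ℕ) : K)⁻¹
      = harmonicIn K (2 * n) - harmonicIn K n := by
  induction n with
  | zero => simp
  | succ n ih =>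
    rw [show 2 * (n + 1) = 2 * n + 1 + 1 by ring, sum_range_succ, sum_range_succ, ih,
      harmonicIn_succ, harmonicIn_succ, harmonicIn_succ, show 2 * n + 1 + 1 = 2 * n + 2 by ring,
      inv_natCast_two_mul_succ, pow_succ, pow_mul]
    field_simp
    ring

end HarmonicIn

section ZModPrime

variable {p : ℕ} [Fact p.Prime]

lemma natCast_choose_pred {j : ℕ} (hj : j < p) :
    ((p - 1).choose j : ZMod p) = (-1) ^ j := by
  obtain ⟨n, rfl⟩ := Nat.exists_eq_add_one.2 (Fact.out : p.Prime).pos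
  rw [Nat.add_sub_cancel]
  induction j with
  | zero => simp
  | succ j ih =>
    have hvanish : ((n + 1).choose (j + 1) : ZMod (n + 1)) = 0 := (ZMod.natCast_eq_zero_iff _ _).2
      ((Fact.out : (n + 1).Prime).dvd_choose_self j.succ_ne_zero hj)
    rw [Nat.choose_succ_succ', Nat.cast_add] at hvanish
    rw [pow_succ, ← ih (by omega)]
    linear_combination hvanish

lemma harmonicIn_pred_sub {n : ℕ} (hn : n < p) :
    harmonicIn (ZMod p) (p - 1 - n) = harmonicIn (ZMod p) (p - 1) + harmonicIn (ZMod p) n := by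
  induction n with
  | zero => simp
  | succ n ih =>
    have hreflect : ((p - 1 - n : ℕ) : ZMod p) = -((n + 1 : ℕ) : ZMod p) := by
      rw [eq_neg_iff_add_eq_zero, ← Nat.cast_add, show p - 1 - n + (n + 1) = p by omega,
        ZMod.natCast_self]
    have hstep := harmonicIn_succ (ZMod p) (p - 1 - (n + 1))
    rw [show p - 1 - (n + 1) + 1 = p - 1 - n by omega, hreflect, inv_neg, ih (by omega)] at hstep
    rw [harmonicIn_succ]
    linear_combination -hstep

lemma two_ne_zero_of_eq_two_mul_add_one {m : ℕ} (hp : p = 2 * m + 1) : (2 : ZMod p) ≠ 0 := by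
  rw [← Nat.cast_ofNat, Ne, ZMod.natCast_eq_zero_iff]
  exact Nat.not_dvd_of_pos_of_lt two_pos (by have := (Fact.out : p.Prime).two_le; omega)

lemma harmonicIn_sub_harmonicIn_sub {m n : ℕ} (hp : p = 2 * m + 1) (hn : n ≤ m) :
    harmonicIn (ZMod p) m - harmonicIn (ZMod p) (m - n)
      = -2 * ∑ i ∈ range n, ((2 * i + 1 : ℕ) : ZMod p)⁻¹ := by
  induction n with
  | zero => simp
  | succ n ih =>
    have hreflect : ((2 * n + 1 : ℕ) : ZMod p) = -(2 * ((m - n : ℕ) : ZMod p)) := by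
      have hp0 : ((2 * n + 1 + 2 * (m - n) : ℕ) : ZMod p) = 0 := by
        rw [show 2 * n + 1 + 2 * (m - n) = p by omega, ZMod.natCast_self]
      push_cast at hp0 ⊢
      linear_combination hp0
    have hinv : ((m - n : ℕ) : ZMod p)⁻¹ = -2 * ((2 * n + 1 : ℕ) : ZMod p)⁻¹ := by
      rw [hreflect, inv_neg, mul_inv]
      linear_combination -((m - n : ℕ) : ZMod p)⁻¹ *
        mul_inv_cancel₀ (two_ne_zero_of_eq_two_mul_add_one hp)
    have hstep := harmonicIn_succ (ZMod p) (m - (n + 1))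
    rw [show m - (n + 1) + 1 = m - n by omega, hinv] at hstep
    rw [sum_range_succ]
    linear_combination ih (by omega) + hstep

lemma sum_range_choose_mul_inv {m : ℕ} (hp : p = 2 * m + 1) :
    ∑ j ∈ range (2 * m), ((2 * m).choose j : ZMod p) * ((j + 1 : ℕ) : ZMod p)⁻¹
      = -harmonicIn (ZMod p) m := by
  have hvanish : harmonicIn (ZMod p) (2 * m) = 0 := by
    have h := harmonicIn_pred_sub (p := p) (n := m) (by omega)
    rw [show p - 1 - m = m by omega, show p - 1 = 2 * m by omega] at h
    linear_combination -h
  calc ∑ j ∈ range (2 * m), ((2 * m).choose j : ZMod p) * ((j + 1 : ℕ) : ZMod p)⁻¹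
      = ∑ j ∈ range (2 * m), (-1) ^ j * ((j + 1 : ℕ) : ZMod p)⁻¹ := by
        refine sum_congr rfl fun j hj => ?_
        rw [show 2 * m = p - 1 by omega, natCast_choose_pred (by rw [mem_range] at hj; omega)]
    _ = harmonicIn (ZMod p) (2 * m) - harmonicIn (ZMod p) m :=
        sum_range_neg_one_pow_mul_inv (two_ne_zero_of_eq_two_mul_add_one hp) m
    _ = -harmonicIn (ZMod p) m := by rw [hvanish, zero_sub]

lemma harmonicIn_three_mul {q : ℕ} (hp : p = 6 * q + 1) :
    harmonicIn (ZMod p) (3 * q) = harmonicIn (ZMod p) q - harmonicIn (ZMod p) (2 * q) := by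
  have hmiddle := harmonicIn_sub_harmonicIn_sub (p := p) (m := 3 * q) (n := q) (by omega) (by omega)
  rw [show 3 * q - q = 2 * q by omega] at hmiddle
  have h2 := two_ne_zero_of_eq_two_mul_add_one (p := p) (m := 3 * q) (by omega)
  linear_combination hmiddle + 2 * harmonicIn_two_mul (K := ZMod p) q
    + harmonicIn (ZMod p) q * mul_inv_cancel₀ h2

end ZModPrime

lemma sum_range_choose_div_succ (n : ℕ) :
    ∑ j ∈ range n, (n.choose j : ℚ) / (j + 1) = (2 ^ (n + 1) - 2) / (n + 1) := by
  have hterm (j : ℕ) :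
      (n.choose j : ℚ) / (j + 1) = ((n + 1).choose (j + 1) : ℚ) / (n + 1) := by
    rw [div_eq_div_iff (by positivity) (by positivity)]
    exact_mod_cast (mul_comm _ _).trans (Nat.add_one_mul_choose_eq n j)
  have htotal : ∑ j ∈ range n, ((n + 1).choose (j + 1) : ℚ) = 2 ^ (n + 1) - 2 := by
    have h := Nat.sum_range_choose (n + 1)
    rw [sum_range_succ, sum_range_succ', Nat.choose_self, Nat.choose_zero_right] at h
    rw [eq_sub_iff_add_eq]
    exact_mod_cast (by omega : ∑ j ∈ range n, (n + 1).choose (j + 1) + 2 = 2 ^ (n + 1))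
  rw [sum_congr rfl fun j _ => hterm j, ← sum_div, htotal]

def HasResidue (p : ℕ) [Fact p.Prime] (x : ℚ) (r : ZMod p) : Prop :=
  ∃ z : ℤ_[p], (z : ℚ_[p]) = x ∧ PadicInt.toZMod z = r

namespace HasResidue

variable {p : ℕ} [Fact p.Prime] {x y : ℚ} {r s : ZMod p}

lemma natCast (n : ℕ) : HasResidue p n n := ⟨n, by simp, by simp⟩

lemma inv_natCast {k : ℕ} (hk : ¬p ∣ k) : HasResidue p (k : ℚ)⁻¹ (k : ZMod p)⁻¹ := by
  have hunit : (k : ℤ_[p]).inv * k = 1 := PadicInt.inv_mul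
    (PadicInt.norm_natCast_eq_one_iff.2 ((Nat.Prime.coprime_iff_not_dvd Fact.out).2 hk))
  refine ⟨(k : ℤ_[p]).inv, ?_, ?_⟩
  · push_cast
    exact eq_inv_of_mul_eq_one_left (by exact_mod_cast congrArg ((↑) : ℤ_[p] → ℚ_[p]) hunit)
  · exact eq_inv_of_mul_eq_one_left (by simpa using congrArg PadicInt.toZMod hunit)

lemma add : HasResidue p x r → HasResidue p y s → HasResidue p (x + y) (r + s)
  | ⟨a, ha, ha'⟩, ⟨b, hb, hb'⟩ =>
    ⟨a + b, by push_cast [ha, hb]; rfl, by rw [map_add, ha', hb']⟩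

lemma sub : HasResidue p x r → HasResidue p y s → HasResidue p (x - y) (r - s)
  | ⟨a, ha, ha'⟩, ⟨b, hb, hb'⟩ =>
    ⟨a - b, by push_cast [ha, hb]; rfl, by rw [map_sub, ha', hb']⟩

lemma mul : HasResidue p x r → HasResidue p y s → HasResidue p (x * y) (r * s)
  | ⟨a, ha, ha'⟩, ⟨b, hb, hb'⟩ =>
    ⟨a * b, by push_cast [ha, hb]; rfl, by rw [map_mul, ha', hb']⟩

lemma sum {ι : Type*} {t : Finset ι} {f : ι → ℚ} {g : ι → ZMod p}
    (h : ∀ i ∈ t, HasResidue p (f i) (g i)) :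
    HasResidue p (∑ i ∈ t, f i) (∑ i ∈ t, g i) := by
  classical
  induction t using Finset.induction_on with
  | empty => exact ⟨0, by simp, by simp⟩
  | insert i t hi ih =>
    rw [sum_insert hi, sum_insert hi]
    exact (h i (mem_insert_self i t)).add (ih fun j hj => h j (mem_insert_of_mem hj))

lemma padicNorm_le (h : HasResidue p x 0) : padicNorm p x ≤ (p : ℚ) ^ (-1 : ℤ) := by
  obtain ⟨z, hzx, hz⟩ := h
  have hmem : z ∈ Ideal.span {(p : ℤ_[p]) ^ 1} := by
    rw [pow_one, ← PadicInt.maximalIdeal_eq_span_p, ← PadicInt.ker_toZMod]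
    exact hz
  have hnorm := (PadicInt.norm_le_pow_iff_mem_span_pow z 1).2 hmem
  rw [PadicInt.norm_def, hzx, Padic.eq_padicNorm, Nat.cast_one] at hnorm
  exact Rat.cast_le (K := ℝ).mp (by rwa [Rat.cast_zpow, Rat.cast_natCast])

lemma harmonic {n : ℕ} (hn : n < p) : HasResidue p (harmonic n) (harmonicIn (ZMod p) n) :=
  sum fun i hi => inv_natCast <|
    Nat.not_dvd_of_pos_of_lt i.succ_pos (by rw [mem_range] at hi; omega)

end HasResidue

/-- Let `p = 6q+1` be prime and `H_n = ∑_{k=1}^n 1/k`. Then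
`2 (2^{6q}-1)/p ≡ H_{2q} - H_q (mod p)`. -/
theorem fermat_quotient_harmonic (p q : ℕ) (hp : p.Prime) (hq : p = 6 * q + 1)
    (H : ℕ → ℚ) (hH : ∀ n, H n = ∑ k ∈ Finset.Icc 1 n, (1 : ℚ) / k) :
    padicNorm p (2 * (((2 : ℚ) ^ (6 * q) - 1) / p) - (H (2 * q) - H q))
      ≤ (p : ℚ) ^ (-(1 : ℤ)) := by
  have : Fact p.Prime := ⟨hp⟩
  have hH_eq (n : ℕ) : H n = harmonic n := by simp only [hH, harmonic_eq_sum_Icc, one_div]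
  have hquotient : 2 * (((2 : ℚ) ^ (6 * q) - 1) / p)
      = ∑ j ∈ range (6 * q), ((6 * q).choose j : ℚ) * ((j + 1 : ℕ) : ℚ)⁻¹ := by
    simp only [Nat.cast_succ, ← div_eq_mul_inv, sum_range_choose_div_succ, hq]
    ring
  have hbinomial :
      HasResidue p (2 * (((2 : ℚ) ^ (6 * q) - 1) / p)) (-harmonicIn (ZMod p) (3 * q)) := by
    rw [hquotient, ← sum_range_choose_mul_inv (by omega), show 2 * (3 * q) = 6 * q by ring]
    exact HasResidue.sum fun j hj => (HasResidue.natCast _).mul <| HasResidue.inv_natCast <|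
      Nat.not_dvd_of_pos_of_lt j.succ_pos (by rw [mem_range] at hj; omega)
  have hres := hbinomial.sub ((HasResidue.harmonic (p := p) (n := 2 * q) (by omega)).sub
    (HasResidue.harmonic (p := p) (n := q) (by omega)))
  rw [harmonicIn_three_mul hq, neg_sub, sub_self] at hres
  rw [hH_eq, hH_eq]
  exact hres.padicNorm_le
end

section
/- Let p = 6q+1 be prime and H_n = ∑_{k=1}^n 1/k. Then H_{3q} ≡ H_q − H_{2q} (mod p), as a congruence of p-adic integers. -/
/-! In characteristic `p = 6q + 1` write `H n = ∑_{k ≤ n} 1/k` and `A n = ∑_{k ≤ n} (-1)^(k+1)/k`.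
Pairing `k` with `p - k` gives `H (6q) = 0` and `H (4q) = H (2q)`, and, `p` being odd, it maps the
part of `A (6q)` over `(2q, 6q]` onto `A (4q)`. Together with `A (2n) = H (2n) - H n` this yields
`-H (3q) = A (6q) = A (2q) + A (4q) = H (4q) - H q = H (2q) - H q`.
Over `ℚ`, multiplying by `(3q)!`, which is prime to `p`, turns the harmonic numbers into integers
whose reductions mod `p` are the sums above. -/

open Finset Nat

theorem Finset.sum_Icc_reflect {M : Type*} [AddCommMonoid M] (f : ℕ → M) {a b n : ℕ}
    (ha : a ≤ n) (hb : b ≤ n) : ∑ k ∈ Icc a b, f (n - k) = ∑ k ∈ Icc (n - b) (n - a), f k :=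
  sum_nbij' (n - ·) (n - ·) (by intro k; simp only [mem_Icc]; omega)
    (by intro k; simp only [mem_Icc]; omega) (by intro k; simp only [mem_Icc]; omega)
    (by intro k; simp only [mem_Icc]; omega) (fun _ _ => rfl)

theorem Finset.sum_Icc_sub_sum_Icc {M : Type*} [AddCommGroup M] (f : ℕ → M) {a m n : ℕ}
    (ha : a ≤ m + 1) (h : m ≤ n) :
    ∑ k ∈ Icc a n, f k - ∑ k ∈ Icc a m, f k = ∑ k ∈ Icc (m + 1) n, f k := by
  rw [← Ico_add_one_right_eq_Icc, ← Ico_add_one_right_eq_Icc, ← Ico_add_one_right_eq_Icc,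
    ← sum_Ico_consecutive f ha (by omega), add_sub_cancel_left]

variable {K : Type*} [Field K]

theorem sum_Icc_two_mul_neg_one_pow_mul_inv (h2 : (2 : K) ≠ 0) (n : ℕ) :
    ∑ k ∈ Icc 1 (2 * n), (-1) ^ (k + 1) * (k : K)⁻¹ =
      ∑ k ∈ Icc 1 (2 * n), (k : K)⁻¹ - ∑ k ∈ Icc 1 n, (k : K)⁻¹ := by
  induction n with
  | zero => simp
  | succ n ih =>
    have h : (2 : K) * ((2 * n + 1 + 1 : ℕ) : K)⁻¹ = ((n + 1 : ℕ) : K)⁻¹ := by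
      rw [show 2 * n + 1 + 1 = 2 * (n + 1) by ring, Nat.cast_mul, Nat.cast_ofNat, mul_inv,
        ← mul_assoc, mul_inv_cancel₀ h2, one_mul]
    rw [show 2 * (n + 1) = 2 * n + 1 + 1 by ring]
    rw [sum_Icc_succ_top (by omega), sum_Icc_succ_top (by omega), sum_Icc_succ_top (by omega),
      sum_Icc_succ_top (by omega), sum_Icc_succ_top (by omega), ih,
      Even.neg_one_pow (n := 2 * n + 1 + 1) ⟨n + 1, by ring⟩,
      Odd.neg_one_pow (n := 2 * n + 1 + 1 + 1) ⟨n + 1, by ring⟩]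
    linear_combination -h

theorem natCast_factorial_mul_sum_Icc_inv {m n : ℕ} (hn : n ≤ m) (hm : (m ! : K) ≠ 0) :
    (m ! : K) * ∑ k ∈ Icc 1 n, (k : K)⁻¹ = ((∑ k ∈ Icc 1 n, m ! / k : ℕ) : K) := by
  rw [Nat.cast_sum, mul_sum]
  refine sum_congr rfl fun k hk => ?_
  simp only [mem_Icc] at hk
  obtain ⟨d, hd⟩ : k ∣ m ! := Nat.dvd_factorial hk.1 (hk.2.trans hn)
  have hk0 : (k : K) ≠ 0 := fun h => hm (by rw [hd, Nat.cast_mul, h, zero_mul])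
  rw [Nat.cast_div ⟨d, hd⟩ hk0, div_eq_mul_inv]

namespace CharP

variable {p : ℕ} [CharP K p]

theorem inv_natCast_sub {k : ℕ} (hk : k ≤ p) : ((p - k : ℕ) : K)⁻¹ = -(k : K)⁻¹ := by
  rw [Nat.cast_sub hk, CharP.cast_eq_zero, zero_sub, inv_neg]

theorem sum_Icc_inv_eq_zero_of_add_eq (hp : Odd p) {a b : ℕ} (hab : a + b = p) :
    ∑ k ∈ Icc a b, (k : K)⁻¹ = 0 :=
  sum_involution (fun k _ => p - k)
    (fun k hk => by rw [inv_natCast_sub (by simp only [mem_Icc] at hk; omega), add_neg_cancel])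
    (fun k _ _ => by obtain ⟨m, rfl⟩ := hp; omega)
    (fun k hk => by simp only [mem_Icc] at hk ⊢; omega)
    (fun k hk => by simp only [mem_Icc] at hk; omega)

theorem neg_one_pow_mul_inv_natCast_sub (hp : Odd p) {k : ℕ} (hk : k ≤ p) :
    (-1) ^ (p - k + 1) * ((p - k : ℕ) : K)⁻¹ = (-1) ^ (k + 1) * (k : K)⁻¹ := by
  obtain ⟨m, rfl⟩ := hp
  rw [inv_natCast_sub hk]
  rcases Nat.even_or_odd k with ⟨j, rfl⟩ | ⟨j, rfl⟩
  · rw [Even.neg_one_pow ⟨m - j + 1, by omega⟩, Odd.neg_one_pow ⟨j, by omega⟩]; ring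
  · rw [Odd.neg_one_pow ⟨m - j, by omega⟩, Even.neg_one_pow ⟨j + 1, by omega⟩]; ring

theorem sum_Icc_inv_three_mul {q : ℕ} (hp : p = 6 * q + 1) :
    ∑ k ∈ Icc 1 (3 * q), (k : K)⁻¹ = ∑ k ∈ Icc 1 q, (k : K)⁻¹ - ∑ k ∈ Icc 1 (2 * q), (k : K)⁻¹ := by
  have hodd : Odd p := ⟨3 * q, by omega⟩
  have h2 : (2 : K) ≠ 0 := Ring.two_ne_zero (by rw [ringChar.eq K p]; omega)
  set H : ℕ → K := fun n => ∑ k ∈ Icc 1 n, (k : K)⁻¹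
  set g : ℕ → K := fun k => (-1) ^ (k + 1) * (k : K)⁻¹
  have hA {m : ℕ} (n : ℕ) (hm : m = 2 * n) : ∑ k ∈ Icc 1 m, g k = H m - H n :=
    hm ▸ sum_Icc_two_mul_neg_one_pow_mul_inv h2 n
  have hH6 : H (6 * q) = 0 := sum_Icc_inv_eq_zero_of_add_eq hodd (by omega)
  have hH42 : H (4 * q) - H (2 * q) = 0 := by
    rw [sum_Icc_sub_sum_Icc _ (by omega) (by omega)]
    exact sum_Icc_inv_eq_zero_of_add_eq hodd (by omega)
  have hA62 : ∑ k ∈ Icc 1 (6 * q), g k - ∑ k ∈ Icc 1 (2 * q), g k = ∑ k ∈ Icc 1 (4 * q), g k :=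
    calc _ = ∑ k ∈ Icc (2 * q + 1) (6 * q), g (p - k) := by
          rw [sum_Icc_sub_sum_Icc _ (by omega) (by omega)]
          refine sum_congr rfl fun k hk => ?_
          simp only [mem_Icc] at hk
          exact (neg_one_pow_mul_inv_natCast_sub hodd (by omega)).symm
      _ = ∑ k ∈ Icc (p - 6 * q) (p - (2 * q + 1)), g k := sum_Icc_reflect g (by omega) (by omega)
      _ = _ := by rw [show p - 6 * q = 1 by omega, show p - (2 * q + 1) = 4 * q by omega]
  rw [hA (3 * q) (by ring), hA q rfl, hA (2 * q) (by ring)] at hA62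
  show H (3 * q) = H q - H (2 * q)
  linear_combination hH6 - hH42 - hA62

end CharP

theorem padicNorm_le_inv_of_natCast_mul_eq {p : ℕ} [Fact p.Prime] {x : ℚ} {c : ℕ} {N : ℤ}
    (hc : ¬ p ∣ c) (hN : (p : ℤ) ∣ N) (hx : (c : ℚ) * x = N) :
    padicNorm p x ≤ (p : ℚ) ^ (-(1 : ℤ)) := by
  have := (padicNorm.dvd_iff_norm_le (n := 1)).mp (by simpa using hN)
  rwa [← hx, padicNorm.mul, (padicNorm.nat_eq_one_iff c).2 hc, one_mul] at this

/-- Let `p = 6q+1` be prime and `H_n = ∑_{k=1}^n 1/k`. Then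
`H_{3q} ≡ H_q - H_{2q} (mod p)`. -/
theorem harmonic_3q_cong (p q : ℕ) (hp : p.Prime) (hq : p = 6 * q + 1)
    (H : ℕ → ℚ) (hH : ∀ n, H n = ∑ k ∈ Finset.Icc 1 n, (1 : ℚ) / k) :
    padicNorm p (H (3 * q) - (H q - H (2 * q))) ≤ (p : ℚ) ^ (-(1 : ℤ)) := by
  have := Fact.mk hp
  set c := (3 * q)!
  have hcp : ¬ p ∣ c := by rw [hp.dvd_factorial]; omega
  set N : ℤ := ((∑ k ∈ Icc 1 (3 * q), c / k : ℕ) : ℤ)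
    - (((∑ k ∈ Icc 1 q, c / k : ℕ) : ℤ) - ((∑ k ∈ Icc 1 (2 * q), c / k : ℕ) : ℤ))
  have hN (K : Type) [Field K] (hc : (c : K) ≠ 0) : (N : K) = c * (∑ k ∈ Icc 1 (3 * q), (k : K)⁻¹
      - (∑ k ∈ Icc 1 q, (k : K)⁻¹ - ∑ k ∈ Icc 1 (2 * q), (k : K)⁻¹)) := by
    simp only [N, Int.cast_sub, Int.cast_natCast]
    rw [← natCast_factorial_mul_sum_Icc_inv le_rfl hc, ← natCast_factorial_mul_sum_Icc_inv
      (by omega) hc, ← natCast_factorial_mul_sum_Icc_inv (by omega) hc]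
    ring
  refine padicNorm_le_inv_of_natCast_mul_eq hcp (N := N) ?_ ?_
  · rw [← ZMod.intCast_zmod_eq_zero_iff_dvd, hN (ZMod p) (by rwa [Ne, ZMod.natCast_eq_zero_iff]),
      CharP.sum_Icc_inv_three_mul hq, sub_self, mul_zero]
  · simp only [hN ℚ (by positivity), hH, one_div]
end

section
/- Let t_n = 108^n·(1/6)_n·(1/3)_n/(n!)^2. For every prime p ≡ 1 (mod 6), t_p ≡ t_1 (mod p^2), i.e., t_p ≡ 6 (mod p^2). -/
/-!
Write `t_p = 6^p A B / ((p-1)!)^2`, where `A` and `B` are the products of `6k+1` and `3k+1` over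
`k < p` with the factor `p` removed; the claim becomes `6^(p-1) A B ≡ ((p-1)!)^2 (mod p^2)`.

Modulo `p^2`, a product `∏ (a k + r)` over a full residue system with its multiple of `p` removed
equals `a^(p-1) W(k₀)`, where `W(k) = (-1)^k k! (p-1-k)!`: the first-order correction is `p` times
a sum of inverses of all nonzero residues, which vanishes. With `p = 6m+1` the claim thus reads
`108^(p-1) W(m) W(2m) ≡ ((p-1)!)^2`.

Computing `(a p)!` once by blocks of length `p` and once by residue classes mod `a` gives a
mod-`p^2` Gauss multiplication formula `a^(a(p-1)) ∏_{0<r<a} W(r(p-1)/a) ≡ ((p-1)!)^(a-1)`.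
For `a = 6` and `a = 2`, with `W(p-1-k) = W(k)`, it yields the square of the claim. Both sides of
the claim are `≡ 1 (mod p)` by Wilson and Fermat, and for odd `p` two such elements of `ℤ/p^2`
with equal squares are equal.
-/

open Finset
open scoped Nat

theorem prod_one_add_mul_of_mul_self_eq_zero {R ι : Type*} [CommRing R] {ε : R}
    (hε : ε * ε = 0) (s : Finset ι) (c : ι → R) :
    ∏ i ∈ s, (1 + ε * c i) = 1 + ε * ∑ i ∈ s, c i := by
  classical
  induction s using Finset.induction_on with
  | empty => simp
  | insert a s ha ih =>
    rw [prod_insert ha, sum_insert ha, ih]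
    linear_combination (c a * ∑ i ∈ s, c i) * hε

theorem Nat.factorial_mul_eq_prod_prod (a n : ℕ) :
    (a * n)! = ∏ k ∈ range n, ∏ r ∈ range a, (a * k + r + 1) := by
  induction n with
  | zero => simp
  | succ n ih =>
    rw [mul_add_one, ← factorial_mul_ascFactorial, ih, prod_range_succ, ascFactorial_eq_prod_range]
    exact congrArg _ (prod_congr rfl fun r _ => by ring)

theorem Nat.factorial_mul_eq_pow_mul_factorial_mul_prod {n : ℕ} (hn : 0 < n) (a : ℕ) :
    (n * a)! = n ^ a * a ! * ∏ s ∈ range a, ∏ j ∈ range (n - 1), (n * s + j + 1) := by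
  obtain ⟨m, rfl⟩ : ∃ m, n = m + 1 := ⟨n - 1, by omega⟩
  have hlast : ∀ s, ∏ j ∈ range (m + 1), ((m + 1) * s + j + 1) =
      (∏ j ∈ range m, ((m + 1) * s + j + 1)) * ((m + 1) * (s + 1)) := fun s => by
    rw [prod_range_succ]
    ring
  rw [factorial_mul_eq_prod_prod, prod_congr rfl fun s _ => hlast s, prod_mul_distrib,
    prod_mul_distrib, prod_const, card_range, prod_range_add_one_eq_factorial, Nat.add_sub_cancel]
  ring

theorem Nat.factorial_mul_eq_mul_prod_prod_erase {a d p : ℕ} (ha : 0 < a) (hp : a * d + 1 = p) :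
    (a * p)! = p ^ a * (a - 1)! * a ^ p * (p - 1)! *
      ∏ r ∈ Ico 1 a, ∏ k ∈ (range p).erase (d * r), (a * k + r) := by
  obtain ⟨b, rfl⟩ : ∃ b, a = b + 1 := ⟨a - 1, by omega⟩
  have hres : ∀ r ∈ range b, ∏ k ∈ range p, ((b + 1) * k + r + 1) =
      (r + 1) * p * ∏ k ∈ (range p).erase (d * (r + 1)), ((b + 1) * k + (r + 1)) := fun r hr => by
    have hr := mem_range.mp hr
    rw [← mul_prod_erase _ _ (mem_range.mpr (by nlinarith : d * (r + 1) < p))]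
    subst hp
    ring_nf
  have hlast : ∏ k ∈ range p, ((b + 1) * k + b + 1) = (b + 1) ^ p * (p * (p - 1)!) := by
    rw [prod_congr rfl fun k _ => show (b + 1) * k + b + 1 = (b + 1) * (k + 1) by ring,
      prod_mul_distrib, prod_const, card_range, prod_range_add_one_eq_factorial,
      mul_factorial_pred (by omega)]
  have hIco : ∏ r ∈ Ico 1 (b + 1), ∏ k ∈ (range p).erase (d * r), ((b + 1) * k + r) =
      ∏ r ∈ range b, ∏ k ∈ (range p).erase (d * (r + 1)), ((b + 1) * k + (r + 1)) := by
    have := prod_Ico_add' (fun r => ∏ k ∈ (range p).erase (d * r), ((b + 1) * k + r)) 0 b 1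
    rw [zero_add, ← range_eq_Ico] at this
    exact this.symm
  rw [factorial_mul_eq_prod_prod, prod_comm, prod_range_succ, prod_congr rfl hres, hlast,
    prod_mul_distrib, prod_mul_distrib, prod_range_add_one_eq_factorial, prod_const, card_range,
    hIco, Nat.add_sub_cancel]
  ring

def wilsonTerm (n k : ℕ) : ℤ := (-1) ^ k * k ! * (n - 1 - k)!

theorem prod_erase_range_sub_eq_wilsonTerm {n k : ℕ} (hk : k < n) :
    ∏ j ∈ (range n).erase k, ((j : ℤ) - k) = wilsonTerm n k := by
  have hsplit : (range n).erase k = range k ∪ Ico (k + 1) n := by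
    ext j
    simp only [mem_erase, mem_range, mem_union, mem_Ico]
    omega
  have hdisj : Disjoint (range k) (Ico (k + 1) n) :=
    disjoint_left.mpr fun j hj hj' => by simp only [mem_range, mem_Ico] at hj hj'; omega
  have hlow : ∏ j ∈ range k, ((j : ℤ) - k) = (-1) ^ k * k ! := by
    calc ∏ j ∈ range k, ((j : ℤ) - k) = ∏ j ∈ range k, (-1 * ((j + 1 : ℕ) : ℤ)) := by
          rw [← prod_range_reflect]
          refine prod_congr rfl fun j hj => ?_
          have : ((k - 1 - j : ℕ) : ℤ) = k - 1 - j := by have := mem_range.mp hj; omega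
          push_cast [this]
          ring
      _ = (-1) ^ k * k ! := by
          rw [prod_mul_distrib, prod_const, card_range, ← Nat.cast_prod,
            prod_range_add_one_eq_factorial]
  have hhigh : ∏ j ∈ Ico (k + 1) n, ((j : ℤ) - k) = (n - 1 - k)! := by
    rw [prod_Ico_eq_prod_range, show n - (k + 1) = n - 1 - k by omega,
      ← prod_range_add_one_eq_factorial, Nat.cast_prod]
    exact prod_congr rfl fun j _ => by push_cast; ring
  rw [hsplit, prod_union hdisj, hlow, hhigh, wilsonTerm]

theorem wilsonTerm_sub_one_sub {n k : ℕ} (hn : Odd n) (hk : k ≤ n - 1) :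
    wilsonTerm n (n - 1 - k) = wilsonTerm n k := by
  have hsign : (-1 : ℤ) ^ (n - 1 - k) = (-1) ^ k := by
    rw [neg_one_pow_eq_pow_mod_two, neg_one_pow_eq_pow_mod_two (n := k)]
    obtain ⟨j, rfl⟩ := hn
    congr 1
    omega
  rw [wilsonTerm, wilsonTerm, hsign, Nat.sub_sub_self hk]
  ring

theorem intCast_wilsonTerm {p k : ℕ} (hk : k ≤ p - 1) :
    ((wilsonTerm p k : ℤ) : ZMod p) = (p - 1)! := by
  induction k with
  | zero => simp [wilsonTerm]
  | succ k ih =>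
    have hcast : ((p - 1 - k : ℕ) : ZMod p) = -(k + 1) := by
      have h := congrArg (Nat.cast : ℕ → ZMod p) (show p - 1 - k + (k + 1) = p by omega)
      push_cast [ZMod.natCast_self] at h
      linear_combination h
    rw [← ih (by omega), wilsonTerm, wilsonTerm,
      ← Nat.mul_factorial_pred (n := p - 1 - k) (by omega), show p - 1 - k - 1 = p - 1 - (k + 1) by omega, Nat.factorial_succ k]
    push_cast [hcast]
    ring

namespace ZMod

theorem sum_range_natCast {M : Type*} [AddCommMonoid M] {n : ℕ} [NeZero n]
    (f : ZMod n → M) : ∑ k ∈ range n, f k = ∑ y : ZMod n, f y :=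
  sum_nbij' (fun k => (k : ZMod n)) val (fun _ _ => mem_univ _)
    (fun y _ => mem_range.mpr y.val_lt) (fun _ hk => val_cast_of_lt (mem_range.mp hk))
    (fun y _ => natCast_zmod_val y) (fun _ _ => rfl)

variable {p : ℕ}

theorem natCast_mul_self_eq_zero : (p : ZMod (p ^ 2)) * p = 0 := by
  rw [← Nat.cast_mul, ← sq, natCast_self]

variable [Fact p.Prime]

theorem sum_inv_eq_zero_s14 (hp : p ≠ 2) : ∑ y : ZMod p, y⁻¹ = 0 := by
  have h3 : 1 < p - 1 := by have := (Fact.out : p.Prime).two_le; omega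
  calc ∑ y : ZMod p, y⁻¹ = ∑ y : ZMod p, y ^ 1 := by
        simpa using Equiv.sum_comp (inv_involutive.toPerm _) id
    _ = 0 := FiniteField.sum_pow_lt_card_sub_one (ZMod p) 1 (by rwa [card])

theorem sum_range_inv_natCast_sub (hp : p ≠ 2) (c : ZMod p) :
    ∑ k ∈ range p, ((k : ZMod p) - c)⁻¹ = 0 := by
  rw [sum_range_natCast (fun y => (y - c)⁻¹)]
  exact (Equiv.sum_comp (Equiv.subRight c) (·⁻¹)).trans (sum_inv_eq_zero_s14 hp)

local notation "π" => castHom (dvd_pow_self p two_ne_zero) (ZMod p)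

theorem natCast_mul_eq_zero_of_castHom_eq_zero {x : ZMod (p ^ 2)} (hx : π x = 0) :
    (p : ZMod (p ^ 2)) * x = 0 := by
  obtain ⟨n, rfl⟩ := natCast_zmod_surjective x
  rw [map_natCast, natCast_eq_zero_iff] at hx
  obtain ⟨d, rfl⟩ := hx
  rw [Nat.cast_mul, ← mul_assoc, natCast_mul_self_eq_zero, zero_mul]

theorem isUnit_natCast_of_not_dvd {n : ℕ} (h : ¬ p ∣ n) : IsUnit (n : ZMod (p ^ 2)) :=
  (isUnit_iff_coprime n _).mpr <|
    (Nat.coprime_comm.mp ((Fact.out : p.Prime).coprime_iff_not_dvd.mpr h)).pow_right 2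

theorem isUnit_natCast_factorial {n : ℕ} (hn : n < p) : IsUnit (n ! : ZMod (p ^ 2)) :=
  isUnit_natCast_of_not_dvd fun h => (Fact.out : p.Prime).dvd_factorial.mp h |>.not_gt hn

theorem isUnit_of_castHom_ne_zero {x : ZMod (p ^ 2)} (hx : π x ≠ 0) : IsUnit x := by
  obtain ⟨n, rfl⟩ := natCast_zmod_surjective x
  rw [map_natCast, Ne, natCast_eq_zero_iff] at hx
  exact isUnit_natCast_of_not_dvd hx

theorem castHom_inv_of_castHom_ne_zero {x : ZMod (p ^ 2)} (hx : π x ≠ 0) :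
    π x⁻¹ = (π x)⁻¹ := by
  refine (inv_eq_of_mul_eq_one_right ?_).symm
  rw [← map_mul, mul_inv_of_unit x (isUnit_of_castHom_ne_zero hx), map_one]

theorem prod_add_natCast_mul_eq_prod {ι : Type*} {s : Finset ι} {x : ι → ZMod (p ^ 2)}
    (hx : ∀ i ∈ s, π (x i) ≠ 0) (hsum : ∑ i ∈ s, (π (x i))⁻¹ = 0) (c : ZMod (p ^ 2)) :
    ∏ i ∈ s, (x i + (p : ZMod (p ^ 2)) * c) = ∏ i ∈ s, x i := by
  have hsplit : ∀ i ∈ s, x i + (p : ZMod (p ^ 2)) * c = x i * (1 + p * ((x i)⁻¹ * c)) :=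
    fun i hi => by
      linear_combination (-((p : ZMod (p ^ 2)) * c)) *
        mul_inv_of_unit _ (isUnit_of_castHom_ne_zero (hx i hi))
  have hlin : (p : ZMod (p ^ 2)) * ∑ i ∈ s, (x i)⁻¹ = 0 := by
    refine natCast_mul_eq_zero_of_castHom_eq_zero ?_
    rw [map_sum, ← hsum]
    exact sum_congr rfl fun i hi => castHom_inv_of_castHom_ne_zero (hx i hi)
  rw [prod_congr rfl hsplit, prod_mul_distrib,
    prod_one_add_mul_of_mul_self_eq_zero natCast_mul_self_eq_zero, ← sum_mul, ← mul_assoc,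
    hlin, zero_mul, add_zero, mul_one]

theorem eq_of_sq_eq_sq_of_castHom_eq (hp : p ≠ 2) {x y : ZMod (p ^ 2)} (hsq : x ^ 2 = y ^ 2)
    (hxy : π x = π y) (hy : π y ≠ 0) : x = y := by
  have hunit : IsUnit (x + y) := isUnit_of_castHom_ne_zero <| by
    rw [map_add, hxy, ← two_mul]
    refine mul_ne_zero ?_ hy
    exact_mod_cast (natCast_eq_zero_iff 2 p).not.mpr fun h =>
      hp ((Nat.prime_dvd_prime_iff_eq Fact.out Nat.prime_two).mp h)
  exact sub_eq_zero.mp <| hunit.mul_left_eq_zero.mp <| by linear_combination hsq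

theorem prod_erase_range_natCast_mul_add (hp : p ≠ 2) {a r k₀ : ℕ} (ha : ¬ p ∣ a)
    (hk₀ : k₀ < p) (hr : a * k₀ + r = r * p) :
    ∏ k ∈ (range p).erase k₀, ((a * k + r : ℕ) : ZMod (p ^ 2)) =
      a ^ (p - 1) * wilsonTerm p k₀ := by
  have hshift : ∀ k : ℕ, ((a * k + r : ℕ) : ZMod (p ^ 2)) =
      ((a * ((k : ℤ) - k₀) : ℤ) : ZMod (p ^ 2)) + p * r := fun k => by
    have := congrArg (Nat.cast : ℕ → ZMod (p ^ 2)) hr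
    push_cast at this ⊢
    linear_combination this
  have ha' : (a : ZMod p) ≠ 0 := (natCast_eq_zero_iff a p).not.mpr ha
  have hne : ∀ k ∈ (range p).erase k₀, π ((a * ((k : ℤ) - k₀) : ℤ) : ZMod (p ^ 2)) ≠ 0 := by
    intro k hk
    obtain ⟨hkk₀, hk⟩ := mem_erase.mp hk
    rw [map_intCast]
    push_cast
    refine mul_ne_zero ha' (sub_ne_zero.mpr fun h => hkk₀ ?_)
    simpa [val_cast_of_lt (mem_range.mp hk), val_cast_of_lt hk₀] using congrArg val h
  have hsum : ∑ k ∈ (range p).erase k₀, (π ((a * ((k : ℤ) - k₀) : ℤ) : ZMod (p ^ 2)))⁻¹ = 0 := by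
    simp only [Int.cast_mul, Int.cast_sub, Int.cast_natCast, map_mul, map_sub, map_natCast, mul_inv]
    rw [sum_erase _ (by simp), ← mul_sum, sum_range_inv_natCast_sub hp, mul_zero]
  rw [prod_congr rfl fun k _ => hshift k, prod_add_natCast_mul_eq_prod hne hsum, ← Int.cast_prod,
    prod_mul_distrib, prod_const, card_erase_of_mem (mem_range.mpr hk₀), card_range,
    prod_erase_range_sub_eq_wilsonTerm hk₀]
  push_cast
  ring

theorem prod_range_natCast_mul_add_add_one (hp : p ≠ 2) (s : ℕ) :
    ∏ j ∈ range (p - 1), ((p * s + j + 1 : ℕ) : ZMod (p ^ 2)) = (p - 1)! := by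
  have hp1 : p - 1 + 1 = p := Nat.sub_add_cancel (Fact.out : p.Prime).one_le
  have hshift : ∀ j : ℕ,
      ((p * s + j + 1 : ℕ) : ZMod (p ^ 2)) = ((j + 1 : ℕ) : ZMod (p ^ 2)) + p * s :=
    fun j => by push_cast; ring
  have hne : ∀ j ∈ range (p - 1), π ((j + 1 : ℕ) : ZMod (p ^ 2)) ≠ 0 := fun j hj => by
    rw [map_natCast, Ne, natCast_eq_zero_iff]
    exact Nat.not_dvd_of_pos_of_lt j.succ_pos (by have := mem_range.mp hj; omega)
  have hsum : ∑ j ∈ range (p - 1), (π ((j + 1 : ℕ) : ZMod (p ^ 2)))⁻¹ = 0 := by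
    have := sum_range_succ' (fun k => ((k : ZMod p))⁻¹) (p - 1)
    rw [hp1, sum_range_natCast (·⁻¹), sum_inv_eq_zero_s14 hp] at this
    simpa [map_natCast] using this.symm
  rw [prod_congr rfl fun j _ => hshift j, prod_add_natCast_mul_eq_prod hne hsum, ← Nat.cast_prod,
    prod_range_add_one_eq_factorial]

theorem pow_mul_prod_wilsonTerm (hp : p ≠ 2) {a d : ℕ} (had : a * d + 1 = p) :
    (a : ZMod (p ^ 2)) ^ (a * (p - 1)) * ∏ r ∈ Ico 1 a, (wilsonTerm p (d * r) : ZMod (p ^ 2)) =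
      ((p - 1)! : ZMod (p ^ 2)) ^ (a - 1) := by
  have hp1 := (Fact.out : p.Prime).one_lt
  have hd : 0 < d := Nat.pos_of_ne_zero fun h => by subst h; omega
  have ha : 0 < a := Nat.pos_of_ne_zero fun h => by subst h; omega
  have hap : a < p := by nlinarith
  have hnat : (a - 1)! * a ^ p * (p - 1)! *
      ∏ r ∈ Ico 1 a, ∏ k ∈ (range p).erase (d * r), (a * k + r) =
      a ! * ∏ s ∈ range a, ∏ j ∈ range (p - 1), (p * s + j + 1) := by
    refine Nat.eq_of_mul_eq_mul_left (pow_pos (zero_lt_one.trans hp1) a) ?_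
    calc _ = (a * p)! := by rw [Nat.factorial_mul_eq_mul_prod_prod_erase ha had]; ring
      _ = _ := by rw [mul_comm, Nat.factorial_mul_eq_pow_mul_factorial_mul_prod (by omega)]; ring
  have hres : ∀ r ∈ Ico 1 a, ∏ k ∈ (range p).erase (d * r), ((a * k + r : ℕ) : ZMod (p ^ 2)) =
      a ^ (p - 1) * wilsonTerm p (d * r) := fun r hr => by
    have hr := mem_Ico.mp hr
    refine prod_erase_range_natCast_mul_add hp (Nat.not_dvd_of_pos_of_lt ha hap) (by nlinarith) ?_
    subst had
    ring
  have hcast := congrArg (Nat.cast : ℕ → ZMod (p ^ 2)) hnat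
  simp only [Nat.cast_mul, Nat.cast_pow, Nat.cast_prod] at hcast
  rw [prod_congr rfl hres, prod_congr rfl fun s _ => prod_range_natCast_mul_add_add_one hp s,
    prod_mul_distrib, prod_const, prod_const, card_range, Nat.card_Ico] at hcast
  have hunit : IsUnit (((a - 1)! : ZMod (p ^ 2)) * a * (p - 1)!) :=
    ((isUnit_natCast_factorial (by omega)).mul
      (isUnit_natCast_of_not_dvd (Nat.not_dvd_of_pos_of_lt ha hap))).mul
      (isUnit_natCast_factorial (by omega))
  refine hunit.mul_left_cancel ?_
  obtain ⟨b, rfl⟩ : ∃ b, a = b + 1 := ⟨a - 1, by omega⟩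
  obtain ⟨q, hq⟩ : ∃ q, p = q + 1 := ⟨p - 1, by omega⟩
  rw [hq, Nat.add_sub_cancel] at hcast ⊢
  rw [Nat.add_sub_cancel, Nat.factorial_succ] at hcast
  push_cast at hcast ⊢
  linear_combination hcast

theorem pow_mul_wilsonTerm_mul_wilsonTerm {m : ℕ} (hm : 6 * m + 1 = p) :
    (108 : ZMod (p ^ 2)) ^ (p - 1) * wilsonTerm p m * wilsonTerm p (2 * m) =
      ((p - 1)! : ZMod (p ^ 2)) ^ 2 := by
  have hp2 : p ≠ 2 := by omega
  have hodd : Odd p := ⟨3 * m, by omega⟩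
  have g6 := pow_mul_prod_wilsonTerm hp2 hm
  have g2 := pow_mul_prod_wilsonTerm hp2 (a := 2) (d := 3 * m) (by omega)
  simp only [prod_Ico_eq_prod_range, prod_range_succ, prod_range_zero, Nat.reduceSub,
    Nat.reduceAdd, Nat.cast_ofNat, one_mul, mul_one, pow_one] at g6 g2
  rw [show m * 5 = p - 1 - m by omega, show m * 4 = p - 1 - 2 * m by omega,
    wilsonTerm_sub_one_sub hodd (by omega), wilsonTerm_sub_one_sub hodd (by omega), mul_comm m 2,
    mul_comm m 3] at g6
  have hpow : (108 : ZMod (p ^ 2)) ^ (p - 1) * 108 ^ (p - 1) * 2 ^ (2 * (p - 1)) =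
      6 ^ (6 * (p - 1)) := by
    rw [pow_mul, pow_mul, ← mul_pow, ← mul_pow]
    norm_num
  set W₁ : ZMod (p ^ 2) := ((wilsonTerm p m : ℤ) : ZMod (p ^ 2))
  set W₂ : ZMod (p ^ 2) := ((wilsonTerm p (2 * m) : ℤ) : ZMod (p ^ 2))
  set W₃ : ZMod (p ^ 2) := ((wilsonTerm p (3 * m) : ℤ) : ZMod (p ^ 2))
  set F : ZMod (p ^ 2) := (((p - 1)! : ℕ) : ZMod (p ^ 2))
  have hsq : (108 ^ (p - 1) * W₁ * W₂) ^ 2 * F = (F ^ 2) ^ 2 * F := by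
    linear_combination g6 + W₁ ^ 2 * W₂ ^ 2 * W₃ * hpow - (108 ^ (p - 1)) ^ 2 * W₁ ^ 2 * W₂ ^ 2 * g2
  have h108 : (108 : ZMod p) ≠ 0 := by
    have hp : p.Prime := Fact.out
    rw [show (108 : ZMod p) = ((2 ^ 2 * 3 ^ 3 : ℕ) : ZMod p) by norm_num, Ne, natCast_eq_zero_iff,
      hp.dvd_mul]
    have := hp.two_le
    rintro (h | h) <;> have := Nat.le_of_dvd (by norm_num) (hp.dvd_of_dvd_pow h) <;> omega
  refine eq_of_sq_eq_sq_of_castHom_eq hp2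
    ((isUnit_natCast_factorial (by omega)).mul_right_cancel hsq) ?_ ?_ <;>
    simp only [W₁, W₂, F, map_mul, map_pow, map_ofNat, map_intCast, map_natCast,
      intCast_wilsonTerm (show m ≤ p - 1 by omega),
      intCast_wilsonTerm (show 2 * m ≤ p - 1 by omega),
      wilsons_lemma, pow_card_sub_one_eq_one h108]
  · ring
  · norm_num

theorem sq_dvd_six_pow_mul_prod_mul_prod_sub {m : ℕ} (hm : 6 * m + 1 = p) :
    ((p ^ 2 : ℕ) : ℤ) ∣ 6 ^ (p - 1) * (∏ k ∈ (range p).erase m, (6 * k + 1 : ℤ)) *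
      (∏ k ∈ (range p).erase (2 * m), (3 * k + 1 : ℤ)) - ((p - 1)! : ℤ) ^ 2 := by
  have hp2 : p ≠ 2 := by omega
  have hp7 : 6 < p := by have := (Fact.out : p.Prime).two_le; omega
  rw [← intCast_eq_intCast_iff_dvd_sub]
  have h6 := prod_erase_range_natCast_mul_add hp2 (a := 6) (r := 1) (k₀ := m)
    (Nat.not_dvd_of_pos_of_lt (by norm_num) (by omega)) (by omega) (by omega)
  have h3 := prod_erase_range_natCast_mul_add hp2 (a := 3) (r := 1)
    (Nat.not_dvd_of_pos_of_lt (by norm_num) (by omega)) (show 2 * m < p by omega) (by omega)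
  push_cast at h6 h3 ⊢
  rw [h6, h3, ← pow_mul_wilsonTerm_mul_wilsonTerm hm,
    show (108 : ZMod (p ^ 2)) = 6 * 6 * 3 by norm_num, mul_pow, mul_pow]
  ring

end ZMod

theorem ascPochhammer_eval_one_div {K : Type*} [Field K] {a : K} (ha : a ≠ 0) (n : ℕ) :
    (ascPochhammer K n).eval (1 / a) = (∏ k ∈ range n, (a * k + 1)) / a ^ n := by
  induction n with
  | zero => simp
  | succ n ih =>
    rw [ascPochhammer_succ_eval, ih, prod_range_succ, pow_succ]
    field_simp
    ring

theorem padicNorm_intCast_div_le {p : ℕ} [Fact p.Prime] {n : ℕ} {a b : ℤ}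
    (ha : ((p ^ n : ℕ) : ℤ) ∣ a) (hb : ¬ (p : ℤ) ∣ b) :
    padicNorm p (a / b) ≤ (p : ℚ) ^ (-n : ℤ) := by
  rw [padicNorm.div, (padicNorm.int_eq_one_iff b).mpr hb, div_one]
  exact padicNorm.dvd_iff_norm_le.mp ha

theorem term_sub_six_eq {p m : ℕ} (hp : p.Prime) (hm : 6 * m + 1 = p) :
    (108 : ℚ) ^ p * (ascPochhammer ℚ p).eval (1 / 6) * (ascPochhammer ℚ p).eval (1 / 3) /
        (p ! : ℚ) ^ 2 - 6 =
      ((6 * (6 ^ (p - 1) * (∏ k ∈ (range p).erase m, (6 * k + 1 : ℤ)) *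
        (∏ k ∈ (range p).erase (2 * m), (3 * k + 1 : ℤ)) - ((p - 1)! : ℤ) ^ 2) : ℤ) : ℚ) /
        (((p - 1)! ^ 2 : ℤ) : ℚ) := by
  have hsplit : ∀ a k₀ : ℕ, k₀ < p → a * k₀ + 1 = p → ∏ k ∈ range p, ((a : ℚ) * k + 1) =
      p * ∏ k ∈ (range p).erase k₀, ((a : ℚ) * k + 1) := fun a k₀ hk₀ h => by
    rw [← mul_prod_erase _ _ (mem_range.mpr hk₀)]
    exact_mod_cast congrArg (· * _) h
  rw [show (1 / 6 : ℚ) = 1 / (6 : ℕ) by norm_num, show (1 / 3 : ℚ) = 1 / (3 : ℕ) by norm_num,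
    ascPochhammer_eval_one_div (by norm_num), ascPochhammer_eval_one_div (by norm_num),
    hsplit 6 m (by omega) hm, hsplit 3 (2 * m) (by omega) (by omega),
    ← Nat.mul_factorial_pred hp.ne_zero]
  have h108 : (108 : ℚ) ^ p = 6 ^ p * 6 ^ p * 3 ^ p := by rw [← mul_pow, ← mul_pow]; norm_num
  have h6 : (6 : ℚ) ^ p = 6 * 6 ^ (p - 1) := by
    conv_lhs => rw [← Nat.sub_add_cancel hp.one_le, pow_succ']
  have hp0 : (p : ℚ) ≠ 0 := by exact_mod_cast hp.ne_zero
  push_cast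
  rw [h108, h6]
  field_simp

/-- Let `t_n = 108^n (1/6)_n (1/3)_n/(n!)^2`. For every prime `p ≡ 1 (mod 6)`,
`t_p ≡ t_1 (mod p^2)`, i.e. `t_p ≡ 6 (mod p^2)`. -/
theorem t_p_cong (p : ℕ) (hp : p.Prime) (h6 : p % 6 = 1)
    (t : ℕ → ℚ)
    (ht : ∀ m, t m = (108 : ℚ) ^ m * (ascPochhammer ℚ m).eval (1/6)
      * (ascPochhammer ℚ m).eval (1/3) / (m.factorial : ℚ) ^ 2) :
    padicNorm p (t p - t 1) ≤ (p : ℚ) ^ (-(2 : ℤ)) ∧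
      padicNorm p (t p - 6) ≤ (p : ℚ) ^ (-(2 : ℤ)) := by
  have := Fact.mk hp
  obtain ⟨m, hm⟩ : ∃ m, 6 * m + 1 = p := ⟨p / 6, by omega⟩
  have ht1 : t 1 = 6 := by norm_num [ht]
  have hF : ¬ (p : ℤ) ∣ (p - 1)! ^ 2 := by
    exact_mod_cast fun h => (hp.dvd_factorial.mp (hp.dvd_of_dvd_pow h)).not_gt (by omega)
  have hle : padicNorm p (t p - 6) ≤ (p : ℚ) ^ (-(2 : ℤ)) := by
    rw [ht, term_sub_six_eq hp hm]
    exact padicNorm_intCast_div_le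
      (dvd_mul_of_dvd_right (ZMod.sq_dvd_six_pow_mul_prod_mul_prod_sub hm) 6) hF
  exact ⟨by rwa [ht1], hle⟩
end
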